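/- arXiv:2301.11890 — 8 statements merged into one kernel-verified Lean document; each statement's English description precedes it below -/
import Mathlib

section
/- For all integers n > m ≥ 0, the number of RNA secondary structure words of length n with m base-pairs equals (1/(n-m)) · C(n-m, m) · C(n-m, m+1), where C denotes the binomial coefficient. (In particular this rational expression is a natural number.) -/
/-- The alphabet {'(', ')', '*'} for RNA secondary structure words. -/
inductive RSym : Type
  | op : RSym   -- '('
  | cl : RSym   -- ')'
  | st : RSym   -- '*'
  deriving DecidableEq

/-- `isRNA n m a` : `a` is an RNA secondary structure word of length `n` with `m` base-pairs:
it has length `n`, exactly `m` occurrences of '(' and of ')', every prefix has at least as many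
'(' as ')', and it has no factor "()". -/
def isRNA (n m : ℕ) (a : List RSym) : Prop :=
  a.length = n ∧
  a.count RSym.op = m ∧
  a.count RSym.cl = m ∧
  (∀ p : ℕ, (a.take p).count RSym.cl ≤ (a.take p).count RSym.op) ∧
  ¬ ([RSym.op, RSym.cl] <:+: a)

open Nat


def Gq (a h s : ℕ) : ℚ :=
  match s with
  | 0 => if a = 0 then 1 else 0
  | t+1 => ((a+t).choose t * ((a+t+h+1).choose (t+1)) : ℕ)
      - (((a+t).choose (t+1)) * ((a+t+h+1).choose t) : ℕ)

lemma Gq_zero (a h : ℕ) : Gq a h 0 = if a = 0 then 1 else 0 := rfl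

lemma Gq_succ (a h t : ℕ) : Gq a h (t+1)
    = ((a+t).choose t : ℚ) * ((a+t+h+1).choose (t+1) : ℚ)
      - ((a+t).choose (t+1) : ℚ) * ((a+t+h+1).choose t : ℚ) := by
  show ((_ * _ : ℕ) : ℚ) - ((_ * _ : ℕ) : ℚ) = _
  push_cast
  ring



lemma Gq00 (s : ℕ) : Gq 0 0 s = 1 := by
  cases s with
  | zero => simp [Gq_zero]
  | succ t => simp [Gq_succ, Nat.choose_self, Nat.choose_succ_self]

lemma Gq0 (h s : ℕ) : Gq 0 h s = ((s+h).choose s : ℚ) := by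
  cases s with
  | zero => simp [Gq_zero]
  | succ t =>
    rw [Gq_succ]
    simp [Nat.choose_self, Nat.choose_succ_self]
    rw [show t+h+1 = t+1+h from by omega]

lemma Gq_step (a h t : ℕ) :
    Gq a h (t+1) = Gq a h t
      + (if 1 ≤ a then Gq (a-1) (h+1) (t+1) - Gq (a-1) h (t+1) else 0)
      + (if 1 ≤ h then Gq a (h-1) (t+1) else 0) := by
  rcases a with _ | b <;> rcases h with _ | g
  · -- a = 0, h = 0
    rw [if_neg (by omega), if_neg (by omega), Gq00, Gq00]; ring
  · -- a = 0, h = g+1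
    rw [if_neg (by omega), if_pos (by omega)]
    simp only [Nat.add_sub_cancel]
    rw [Gq0, Gq0, Gq0]
    rw [show t+1+(g+1) = (t+g+1)+1 from by omega, Nat.choose_succ_succ' (t+g+1) t,
      show t+(g+1) = t+g+1 from by omega, show t+1+g = t+g+1 from by omega]
    push_cast; ring
  · -- a = b+1, h = 0
    rw [if_pos (by omega), if_neg (by omega)]
    simp only [Nat.add_sub_cancel]
    rcases t with _ | r
    · rw [Gq_succ, Gq_succ, Gq_succ, Gq_zero, if_neg (by omega)]
      simp [Nat.choose_one_right]
      push_cast; ring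
    · rw [Gq_succ, Gq_succ, Gq_succ, Gq_succ]
      simp only [show b+1+(r+1) = b+r+2 from by omega,
        show b+1+(r+1)+0+1 = b+r+3 from by omega,
        show b+1+r = b+r+1 from by omega,
        show b+1+r+0+1 = b+r+2 from by omega,
        show b+(r+1) = b+r+1 from by omega,
        show b+(r+1)+1+1 = b+r+3 from by omega,
        show b+(r+1)+0+1 = b+r+2 from by omega,
        show b+r+2+0+1 = b+r+3 from by omega,
        show b+r+1+0+1 = b+r+2 from by omega,
        show b+r+1+1+1 = b+r+3 from by omega]
      rw [show (b+r+3).choose (r+1+1) = (b+r+2).choose (r+1) + (b+r+2).choose (r+1+1) from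
          Nat.choose_succ_succ' (b+r+2) (r+1),
        show (b+r+3).choose (r+1) = (b+r+2).choose r + (b+r+2).choose (r+1) from
          Nat.choose_succ_succ' (b+r+2) r,
        show (b+r+2).choose (r+1) = (b+r+1).choose r + (b+r+1).choose (r+1) from
          Nat.choose_succ_succ' (b+r+1) r,
        show (b+r+2).choose (r+1+1) = (b+r+1).choose (r+1) + (b+r+1).choose (r+1+1) from
          Nat.choose_succ_succ' (b+r+1) (r+1)]
      push_cast; ring
  · -- a = b+1, h = g+1
    rw [if_pos (by omega), if_pos (by omega)]
    simp only [Nat.add_sub_cancel]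
    rcases t with _ | r
    · rw [Gq_succ, Gq_succ, Gq_succ, Gq_succ, Gq_zero, if_neg (by omega)]
      simp [Nat.choose_one_right]
      push_cast; ring
    · rw [Gq_succ, Gq_succ, Gq_succ, Gq_succ, Gq_succ]
      simp only [show b+1+(r+1) = b+r+2 from by omega,
        show b+1+(r+1)+(g+1)+1 = b+g+r+4 from by omega,
        show b+1+r = b+r+1 from by omega,
        show b+1+r+(g+1)+1 = b+g+r+3 from by omega,
        show b+(r+1) = b+r+1 from by omega,
        show b+(r+1)+(g+2)+1 = b+g+r+4 from by omega,
        show b+(r+1)+(g+1)+1 = b+g+r+3 from by omega,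
        show b+1+(r+1)+g+1 = b+g+r+3 from by omega,
        show b+r+2+(g+1)+1 = b+g+r+4 from by omega,
        show b+r+1+(g+1)+1 = b+g+r+3 from by omega,
        show b+r+1+(g+1+1)+1 = b+g+r+4 from by omega,
        show b+r+1+(g+2)+1 = b+g+r+4 from by omega,
        show b+r+2+g+1 = b+g+r+3 from by omega]
      rw [show (b+g+r+4).choose (r+1+1) = (b+g+r+3).choose (r+1) + (b+g+r+3).choose (r+1+1) from
          Nat.choose_succ_succ' (b+g+r+3) (r+1),
        show (b+g+r+4).choose (r+1) = (b+g+r+3).choose r + (b+g+r+3).choose (r+1) from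
          Nat.choose_succ_succ' (b+g+r+3) r,
        show (b+r+2).choose (r+1) = (b+r+1).choose r + (b+r+1).choose (r+1) from
          Nat.choose_succ_succ' (b+r+1) r,
        show (b+r+2).choose (r+1+1) = (b+r+1).choose (r+1) + (b+r+1).choose (r+1+1) from
          Nat.choose_succ_succ' (b+r+1) (r+1)]
      push_cast; ring

def Fqq (L a h : ℕ) : ℚ := if 2*a + h ≤ L then Gq a h (L - 2*a - h) else 0

lemma Fqq_step (L a h : ℕ) :
    Fqq (L+1) a h = Fqq L a h
      + (if 1 ≤ a then Fqq L (a-1) (h+1) - (if 1 ≤ L then Fqq (L-1) (a-1) h else 0) else 0)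
      + (if 1 ≤ h then Fqq L a (h-1) else 0) := by
  by_cases hle : 2*a + h ≤ L + 1
  · rcases Nat.lt_or_ge L (2*a+h) with hc | hc
    · -- 2a + h = L + 1
      have he : 2*a + h = L + 1 := by omega
      simp only [Fqq]
      rw [if_pos (by omega), show L+1-2*a-h = 0 from by omega, Gq_zero]
      rcases a with _ | b
      · -- a = 0, h = L+1
        rw [if_pos rfl, if_neg (by omega), if_neg (by omega), if_pos (by omega),
          if_pos (by omega : 2*0 + (h-1) ≤ L), show L-2*0-(h-1) = 0 from by omega, Gq_zero,
          if_pos rfl]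
        ring
      · -- a = b+1
        rw [if_neg (by omega), if_neg (by omega : ¬ (2*(b+1) + h ≤ L)), if_pos (by omega)]
        simp only [Nat.add_sub_cancel]
        rw [if_pos (by omega : 2*b + (h+1) ≤ L), if_pos (by omega : 1 ≤ L),
          if_pos (by omega : 2*b + h ≤ L-1),
          show L-2*b-(h+1) = 0 from by omega, show L-1-2*b-h = 0 from by omega]
        by_cases hh : 1 ≤ h
        · rw [if_pos hh, if_pos (by omega : 2*(b+1) + (h-1) ≤ L),
            show L-2*(b+1)-(h-1) = 0 from by omega]
          simp only [Gq_zero]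
          rw [if_neg (by omega : ¬ (b+1 = 0))]
          ring
        · rw [if_neg hh]
          simp only [Gq_zero]
          ring
    · -- 2a + h ≤ L
      simp only [Fqq]
      rw [if_pos (by omega), if_pos (by omega), show L+1-2*a-h = (L-2*a-h)+1 from by omega,
        Gq_step a h (L-2*a-h)]
      by_cases ha : 1 ≤ a
      · rw [if_pos ha, if_pos ha, if_pos (by omega : 2*(a-1) + (h+1) ≤ L),
          if_pos (by omega : 1 ≤ L), if_pos (by omega : 2*(a-1) + h ≤ L - 1),
          show L-2*(a-1)-(h+1) = L-2*a-h+1 from by omega,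
          show L-1-2*(a-1)-h = L-2*a-h+1 from by omega]
        by_cases hh : 1 ≤ h
        · rw [if_pos hh, if_pos hh, if_pos (by omega : 2*a + (h-1) ≤ L),
            show L-2*a-(h-1) = L-2*a-h+1 from by omega]
        · rw [if_neg hh, if_neg hh]
      · rw [if_neg ha, if_neg ha]
        by_cases hh : 1 ≤ h
        · rw [if_pos hh, if_pos hh, if_pos (by omega : 2*a + (h-1) ≤ L),
            show L-2*a-(h-1) = L-2*a-h+1 from by omega]
        · rw [if_neg hh, if_neg hh]
  · -- everything vanishes
    simp only [Fqq]
    rw [if_neg (by omega)]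
    split_ifs <;> first | (exfalso; omega) | norm_num

lemma Gq_final (m t : ℕ) : Gq m 0 (t+1)
    = (1/((m+t+1 : ℕ) : ℚ)) * ((m+t+1).choose m : ℚ) * ((m+t+1).choose (m+1) : ℚ) := by
  rcases m with _ | c
  · rw [Gq00]
    have hne : ((t:ℚ)+1) ≠ 0 := by positivity
    simp [Nat.choose_one_right]
    field_simp
  · rw [Gq_succ]
    simp only [show c+1+t = c+t+1 from by omega, show c+t+1+0+1 = c+t+2 from by omega,
      show c+1+t+0+1 = c+t+2 from by omega, show c+1+t+1 = c+t+2 from by omega]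
    have e1 : ((c+t+1).choose t : ℚ) = (c+t+1) ! / (t ! * (c+1) !) := by
      rw [Nat.cast_choose ℚ (by omega : t ≤ c+t+1), show c+t+1-t = c+1 from by omega]
    have e2 : ((c+t+2).choose (t+1) : ℚ) = (c+t+2) ! / ((t+1) ! * (c+1) !) := by
      rw [Nat.cast_choose ℚ (by omega : t+1 ≤ c+t+2), show c+t+2-(t+1) = c+1 from by omega]
    have e3 : ((c+t+1).choose (t+1) : ℚ) = (c+t+1) ! / ((t+1) ! * c !) := by
      rw [Nat.cast_choose ℚ (by omega : t+1 ≤ c+t+1), show c+t+1-(t+1) = c from by omega]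
    have e4 : ((c+t+2).choose t : ℚ) = (c+t+2) ! / (t ! * (c+2) !) := by
      rw [Nat.cast_choose ℚ (by omega : t ≤ c+t+2), show c+t+2-t = c+2 from by omega]
    have e5 : ((c+t+2).choose (c+1) : ℚ) = (c+t+2) ! / ((c+1) ! * (t+1) !) := by
      rw [Nat.cast_choose ℚ (by omega : c+1 ≤ c+t+2), show c+t+2-(c+1) = t+1 from by omega]
    have e6 : ((c+t+2).choose (c+1+1) : ℚ) = (c+t+2) ! / ((c+2) ! * t !) := by
      rw [Nat.cast_choose ℚ (by omega : c+1+1 ≤ c+t+2), show c+t+2-(c+1+1) = t from by omega]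
    have p1 : ((c+t+2) ! : ℚ) = (c+t+2) * (c+t+1) ! := by
      rw [show c+t+2 = (c+t+1)+1 from by omega, Nat.factorial_succ]; push_cast; ring
    have p2 : ((t+1) ! : ℚ) = (t+1) * t ! := by
      rw [Nat.factorial_succ]; push_cast; ring
    have p3 : ((c+2) ! : ℚ) = (c+2) * (c+1) ! := by
      rw [show c+2 = (c+1)+1 from by omega, Nat.factorial_succ]; push_cast; ring
    have p4 : ((c+1) ! : ℚ) = (c+1) * c ! := by
      rw [Nat.factorial_succ]; push_cast; ring
    rw [e1, e2, e3, e4, e5, e6, p1, p2, p3, p4]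
    have n1 : ((c+t+1) ! : ℚ) ≠ 0 := by exact_mod_cast (Nat.factorial_ne_zero _)
    have n2 : (t ! : ℚ) ≠ 0 := by exact_mod_cast (Nat.factorial_ne_zero _)
    have n3 : (c ! : ℚ) ≠ 0 := by exact_mod_cast (Nat.factorial_ne_zero _)
    have n4 : ((c:ℚ)+t+2) ≠ 0 := by positivity
    have n5 : ((c:ℚ)+t+1+1) ≠ 0 := by positivity
    push_cast
    field_simp
    ring

lemma Fqq_final (n m : ℕ) (h : m < n) : Fqq n m 0
    = (1/((n:ℚ) - m)) * ((n-m).choose m : ℚ) * ((n-m).choose (m+1) : ℚ) := by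
  have hcast : ((n:ℚ) - m) = ((n - m : ℕ) : ℚ) := by
    rw [Nat.cast_sub h.le]
  rcases Nat.lt_or_ge n (2*m) with hc | hc
  · rw [Fqq, if_neg (by omega), Nat.choose_eq_zero_of_lt (by omega : n - m < m)]
    simp
  · rcases Nat.eq_or_lt_of_le hc with he | hlt
    · -- n = 2m, m ≥ 1
      have hm : 1 ≤ m := by omega
      rw [Fqq, if_pos (by omega), show n-2*m-0 = 0 from by omega, Gq_zero, if_neg (by omega),
        show n-m = m from by omega, Nat.choose_succ_self]
      simp
    · -- n ≥ 2m+1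
      have ht : n - 2*m - 0 = (n-2*m-1)+1 := by omega
      rw [Fqq, if_pos (by omega), ht, Gq_final m (n-2*m-1), hcast,
        show m+(n-2*m-1)+1 = n-m from by omega]



open List in
lemma infix_opcl_cons (c : RSym) (t : List RSym) :
    ([RSym.op, RSym.cl] <:+: (c :: t)) ↔
      ([RSym.op, RSym.cl] <:+: t ∨ (c = RSym.op ∧ t.head? = some RSym.cl)) := by
  rw [List.infix_cons_iff]
  constructor
  · rintro (hp | hi)
    · rcases List.cons_prefix_cons.mp hp with ⟨he, h2⟩
      right
      refine ⟨he.symm, ?_⟩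
      cases t with
      | nil => exact absurd (List.eq_nil_of_prefix_nil h2) (by simp)
      | cons x t' =>
        rcases List.cons_prefix_cons.mp h2 with ⟨he2, -⟩
        simp [he2.symm]
    · exact Or.inl hi
  · rintro (hi | ⟨rfl, hh⟩)
    · exact Or.inr hi
    · left
      cases t with
      | nil => simp at hh
      | cons x t' =>
        simp only [List.head?_cons, Option.some.injEq] at hh
        subst hh
        exact ⟨t', rfl⟩

/-- the defining condition for membership in `SS`. -/
def COND (L a h : ℕ) (fl : Bool) (w : List RSym) : Prop :=
  w.length = L ∧ w.count RSym.op = a ∧ w.count RSym.cl = a + h ∧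
  (∀ p : ℕ, (w.take p).count RSym.cl ≤ (w.take p).count RSym.op + h) ∧
  ¬ ([RSym.op, RSym.cl] <:+: w) ∧ (fl = true → w.head? ≠ some RSym.cl)

lemma cond_st (L a h : ℕ) (fl : Bool) (t : List RSym) :
    COND (L+1) a h fl (RSym.st :: t) ↔ COND L a h false t := by
  unfold COND
  constructor
  · rintro ⟨h1, h2, h3, h4, h5, -⟩
    refine ⟨by simpa using h1, by simpa using h2, by simpa using h3, ?_, ?_, by simp⟩
    · intro p
      have := h4 (p+1)
      simpa using this
    · intro hc
      exact h5 ((infix_opcl_cons _ _).mpr (Or.inl hc))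
  · rintro ⟨h1, h2, h3, h4, h5, -⟩
    refine ⟨by simpa using h1, by simpa using h2, by simpa using h3, ?_, ?_, by simp⟩
    · intro p
      cases p with
      | zero => simp
      | succ q => simpa using h4 q
    · rw [infix_opcl_cons]
      rintro (hc | ⟨hc, -⟩)
      · exact h5 hc
      · exact absurd hc (by simp)

lemma cond_op (L a h : ℕ) (fl : Bool) (t : List RSym) :
    COND (L+1) a h fl (RSym.op :: t) ↔ (1 ≤ a ∧ COND L (a-1) (h+1) true t) := by
  unfold COND
  constructor
  · rintro ⟨h1, h2, h3, h4, h5, -⟩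
    simp only [List.count_cons] at h2 h3
    have ha : 1 ≤ a := by simp at h2; omega
    refine ⟨ha, by simpa using h1, by simp at h2 ⊢; omega, by simp at h3 ⊢; omega, ?_, ?_, ?_⟩
    · intro p
      have := h4 (p+1)
      simp at this ⊢
      omega
    · intro hc
      exact h5 ((infix_opcl_cons _ _).mpr (Or.inl hc))
    · intro _ hh
      exact h5 ((infix_opcl_cons _ _).mpr (Or.inr ⟨rfl, hh⟩))
  · rintro ⟨ha, h1, h2, h3, h4, h5, h6⟩
    refine ⟨by simpa using h1, by simp at h2 ⊢; omega, by simp at h3 ⊢; omega, ?_, ?_, by simp⟩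
    · intro p
      cases p with
      | zero => simp
      | succ q =>
        have := h4 q
        simp at this ⊢
        omega
    · rw [infix_opcl_cons]
      rintro (hc | ⟨-, hc⟩)
      · exact h5 hc
      · exact h6 rfl hc

lemma cond_cl (L a h : ℕ) (fl : Bool) (t : List RSym) :
    COND (L+1) a h fl (RSym.cl :: t) ↔ (1 ≤ h ∧ fl = false ∧ COND L a (h-1) false t) := by
  unfold COND
  constructor
  · rintro ⟨h1, h2, h3, h4, h5, h6⟩
    have hh : 1 ≤ h := by
      have := h4 1
      simp [List.count_cons] at this
      omega
    have hfl : fl = false := by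
      cases fl with
      | false => rfl
      | true => exact absurd (by simp) (h6 rfl)
    refine ⟨hh, hfl, by simpa using h1, by simpa using h2, by simp at h3 ⊢; omega, ?_, ?_, by simp⟩
    · intro p
      have := h4 (p+1)
      simp at this ⊢
      omega
    · intro hc
      exact h5 ((infix_opcl_cons _ _).mpr (Or.inl hc))
  · rintro ⟨hh, hfl, h1, h2, h3, h4, h5, -⟩
    refine ⟨by simpa using h1, by simpa using h2, by simp at h3 ⊢; omega, ?_, ?_, by simp [hfl]⟩
    · intro p
      cases p with
      | zero => simp
      | succ q =>
        have := h4 q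
        simp at this ⊢
        omega
    · rw [infix_opcl_cons]
      rintro (hc | ⟨hc, -⟩)
      · exact h5 hc
      · exact absurd hc (by simp)

def SS : ℕ → ℕ → ℕ → Bool → Finset (List RSym)
  | 0, a, h, _ => if a = 0 ∧ h = 0 then {([] : List RSym)} else ∅
  | (L+1), a, h, fl =>
      ((SS L a h false).image (RSym.st :: ·)) ∪
      (((if 1 ≤ a then SS L (a-1) (h+1) true else ∅)).image (RSym.op :: ·)) ∪
      (((if 1 ≤ h ∧ fl = false then SS L a (h-1) false else ∅)).image (RSym.cl :: ·))

lemma mem_if_empty {P : Prop} [Decidable P] {s : Finset (List RSym)} {x : List RSym} :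
    (x ∈ if P then s else ∅) ↔ P ∧ x ∈ s := by
  split_ifs with h <;> simp [h]

lemma mem_SS : ∀ (L a h : ℕ) (fl : Bool) (w : List RSym),
    w ∈ SS L a h fl ↔ COND L a h fl w := by
  intro L
  induction L with
  | zero =>
    intro a h fl w
    rw [SS]
    unfold COND
    split_ifs with hc
    · simp only [Finset.mem_singleton]
      constructor
      · rintro rfl
        refine ⟨by simp, by simp [hc.1], by simp [hc.1, hc.2], by simp, by simp, by simp⟩
      · rintro ⟨h1, -, -, -, -, -⟩
        exact List.length_eq_zero_iff.mp h1
    · simp only [Finset.notMem_empty, false_iff]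
      rintro ⟨h1, h2, h3, -, -, -⟩
      have : w = [] := List.length_eq_zero_iff.mp h1
      subst this
      simp at h2 h3
      exact hc ⟨h2.symm, by omega⟩
  | succ L IH =>
    intro a h fl w
    rw [SS]
    cases w with
    | nil =>
      simp only [Finset.mem_union, Finset.mem_image]
      constructor
      · rintro ((⟨x, -, hx⟩ | ⟨x, -, hx⟩) | ⟨x, -, hx⟩) <;> simp at hx
      · rintro ⟨h1, -⟩
        simp [COND] at h1
    | cons c t =>
      simp only [Finset.mem_union, Finset.mem_image, mem_if_empty]
      cases c with
      | st =>
        rw [cond_st]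
        constructor
        · rintro ((⟨x, hx, he⟩ | ⟨x, hx, he⟩) | ⟨x, hx, he⟩) <;> simp at he
          subst he
          exact (IH a h false _).mp hx
        · intro hc
          exact Or.inl (Or.inl ⟨t, (IH a h false t).mpr hc, rfl⟩)
      | op =>
        rw [cond_op]
        constructor
        · rintro ((⟨x, hx, he⟩ | ⟨x, ⟨ha, hx⟩, he⟩) | ⟨x, hx, he⟩) <;> simp at he
          subst he
          exact ⟨ha, (IH (a-1) (h+1) true _).mp hx⟩
        · rintro ⟨ha, hc⟩
          exact Or.inl (Or.inr ⟨t, ⟨ha, (IH (a-1) (h+1) true t).mpr hc⟩, rfl⟩)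
      | cl =>
        rw [cond_cl]
        constructor
        · rintro ((⟨x, hx, he⟩ | ⟨x, hx, he⟩) | ⟨x, ⟨⟨hh, hfl⟩, hx⟩, he⟩) <;> simp at he
          subst he
          exact ⟨hh, hfl, (IH a (h-1) false _).mp hx⟩
        · rintro ⟨hh, hfl, hc⟩
          exact Or.inr ⟨t, ⟨⟨hh, hfl⟩, (IH a (h-1) false t).mpr hc⟩, rfl⟩

lemma card_SS (L : ℕ) : ∀ (a h : ℕ) (fl : Bool),
    ((SS L a h fl).card : ℚ)
      = Fqq L a h - (if fl = true ∧ 1 ≤ h ∧ 1 ≤ L then Fqq (L-1) a (h-1) else 0) := by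
  induction L with
  | zero =>
    intro a h fl
    rw [SS, Fqq, if_neg (by rintro ⟨-, -, hx⟩; omega :
      ¬ (fl = true ∧ 1 ≤ h ∧ 1 ≤ 0))]
    by_cases hc : a = 0 ∧ h = 0
    · rw [if_pos hc, if_pos (by omega : 2*a + h ≤ 0)]
      rcases hc with ⟨rfl, rfl⟩
      simp [Gq_zero]
    · rw [if_neg hc, if_neg (by omega : ¬ (2*a + h ≤ 0))]
      simp
  | succ L IH =>
    intro a h fl
    have hinj : ∀ c : RSym, Function.Injective (c :: · : List RSym → List RSym) :=
      fun c x y hxy => by simpa using hxy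
    have hhead : ∀ (c : RSym) (s : Finset (List RSym)) (x : List RSym),
        x ∈ s.image (c :: ·) → x.head? = some c := by
      rintro c s x hx
      rcases Finset.mem_image.mp hx with ⟨u, -, rfl⟩
      rfl
    have hd2 : Disjoint ((SS L a h false).image (RSym.st :: ·))
        (((if 1 ≤ a then SS L (a-1) (h+1) true else ∅)).image (RSym.op :: ·)) := by
      rw [Finset.disjoint_left]
      intro x h1 h2
      have := hhead _ _ _ h1
      have := hhead _ _ _ h2
      simp_all
    have hd1 : Disjoint (((SS L a h false).image (RSym.st :: ·)) ∪
        (((if 1 ≤ a then SS L (a-1) (h+1) true else ∅)).image (RSym.op :: ·)))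
        (((if 1 ≤ h ∧ fl = false then SS L a (h-1) false else ∅)).image (RSym.cl :: ·)) := by
      rw [Finset.disjoint_left]
      intro x h1 h2
      have h3 := hhead _ _ _ h2
      rcases Finset.mem_union.mp h1 with h1 | h1 <;>
        (have h4 := hhead _ _ _ h1; simp_all)
    rw [SS, Finset.card_union_of_disjoint hd1, Finset.card_union_of_disjoint hd2,
      Finset.card_image_of_injective _ (hinj RSym.st),
      Finset.card_image_of_injective _ (hinj RSym.op),
      Finset.card_image_of_injective _ (hinj RSym.cl),
      apply_ite Finset.card, apply_ite Finset.card]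
    push_cast [apply_ite (Nat.cast : ℕ → ℚ), Finset.card_empty]
    rw [IH, IH, IH]
    cases fl with
    | false =>
      simp only [show (false = true) = False from by simp, false_and, if_false, sub_zero,
        true_and, and_true, show (1 ≤ h+1 ∧ 1 ≤ L) = (1 ≤ L) from by
          simp [Nat.le_add_left 1 h], show h+1-1 = h from by omega]
      rw [Fqq_step]
    | true =>
      simp only [show (true = true) = True from by simp, true_and,
        show (1 ≤ h ∧ false) = False from by simp, if_false,
        show (false = true) = False from by simp, false_and, sub_zero,
        show (1 ≤ h+1 ∧ 1 ≤ L) = (1 ≤ L) from by simp [Nat.le_add_left 1 h],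
        show h+1-1 = h from by omega,
        show (1 ≤ h ∧ 1 ≤ L+1) = (1 ≤ h) from by
          simp [Nat.le_add_left 1 L], show L+1-1 = L from by omega]
      rw [Fqq_step]
      simp only [show (1 ≤ h ∧ true = false) = False from by simp, if_false,
        show (1 ≤ h ∧ True) = (1 ≤ h) from by simp]
      ring

/-- For all `n > m ≥ 0`, the number of RNA secondary structure words of length `n` with
`m` base-pairs equals `(1/(n-m)) · C(n-m, m) · C(n-m, m+1)`
(in particular this rational expression is a natural number). -/
theorem rna_count_eq_formula (n m : ℕ) (h : m < n) :
    ({a : List RSym | isRNA n m a}.ncard : ℚ) =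
      (1 / ((n : ℚ) - (m : ℚ))) * (Nat.choose (n - m) m : ℚ) *
        (Nat.choose (n - m) (m + 1) : ℚ) := by
  have hset : {a : List RSym | isRNA n m a} = ↑(SS n m 0 false) := by
    ext w
    simp only [Set.mem_setOf_eq, Finset.mem_coe, mem_SS]
    unfold isRNA COND
    constructor
    · rintro ⟨h1, h2, h3, h4, h5⟩
      exact ⟨h1, h2, by simpa using h3, by simpa using h4, h5, by simp⟩
    · rintro ⟨h1, h2, h3, h4, h5, -⟩
      exact ⟨h1, h2, by simpa using h3, by simpa using h4, h5⟩
  rw [hset, Set.ncard_coe_finset, card_SS n m 0 false,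
    if_neg (by simp : ¬ (false = true ∧ 1 ≤ 0 ∧ 1 ≤ n)), sub_zero]
  exact Fqq_final n m h
end

section
/- For all integers n ≥ 1 and m ≥ 1, there is a bijection between the set A_{n,m} and the disjoint union of A_{n-1,m} together with, for each pair of integers (i, j) with 0 ≤ i ≤ m-1 and 2i ≤ j ≤ n - 2(m - i) - 1, the Cartesian product A_{n-2-j, m-1-i} × A_{j, i}. Explicitly, a word in A_{n,m} beginning with '*' corresponds to the word in A_{n-1,m} obtained by deleting its first symbol, and a word in A_{n,m} beginning with '(' whose matching ')' is at position n - j, with i bracket pairs appearing after that matching ')', corresponds to the pair (b, c) ∈ A_{n-2-j, m-1-i} × A_{j, i}, where a = '(' ++ b ++ ')' ++ c. -/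
/-- The set `A_{n,m}` of RNA secondary structure words, as a type. -/
def RNAset (n m : ℕ) : Type := {a : List RSym // isRNA n m a}

/-- The index set of pairs `(i, j)` with `0 ≤ i ≤ m - 1` and `2i ≤ j ≤ n - 2(m - i) - 1`
(the bounds being read over the integers). -/
def Idx (n m : ℕ) : Type :=
  {p : ℕ × ℕ // (p.1 : ℤ) ≤ (m : ℤ) - 1 ∧ 2 * p.1 ≤ p.2 ∧
    (p.2 : ℤ) ≤ (n : ℤ) - 2 * ((m : ℤ) - (p.1 : ℤ)) - 1}

open List

@[simp] lemma cnt_op_op (l : List RSym) : (RSym.op :: l).count RSym.op = 1 + l.count RSym.op := by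
  simp [List.count_cons]; omega
@[simp] lemma cnt_op_cl (l : List RSym) : (RSym.cl :: l).count RSym.op = l.count RSym.op := by
  simp [List.count_cons]
@[simp] lemma cnt_op_st (l : List RSym) : (RSym.st :: l).count RSym.op = l.count RSym.op := by
  simp [List.count_cons]
@[simp] lemma cnt_cl_op (l : List RSym) : (RSym.op :: l).count RSym.cl = l.count RSym.cl := by
  simp [List.count_cons]
@[simp] lemma cnt_cl_cl (l : List RSym) : (RSym.cl :: l).count RSym.cl = 1 + l.count RSym.cl := by
  simp [List.count_cons]; omega
@[simp] lemma cnt_cl_st (l : List RSym) : (RSym.st :: l).count RSym.cl = l.count RSym.cl := by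
  simp [List.count_cons]

lemma count_sum_le (l : List RSym) : l.count RSym.op + l.count RSym.cl ≤ l.length := by
  induction l with
  | nil => simp
  | cons x t ih => rcases x <;> simp <;> omega

lemma exists_split {n m : ℕ} {r : List RSym} (h : isRNA n m (RSym.op :: r)) (hm : 1 ≤ m) :
    ∃ b c : List RSym, r = b ++ RSym.cl :: c ∧ b ≠ [] ∧
      isRNA b.length (b.count RSym.op) b ∧ isRNA c.length (c.count RSym.op) c ∧
      b.count RSym.op + c.count RSym.op + 1 = m ∧ c.count RSym.cl = c.count RSym.op ∧
      n = b.length + c.length + 2 := by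
  classical
  obtain ⟨hl, ho, hc, hp, hn⟩ := h
  have hex : ∃ p : ℕ, 2 ≤ p ∧ ((RSym.op :: r).take p).count RSym.cl
      = ((RSym.op :: r).take p).count RSym.op := by
    refine ⟨n, ?_, ?_⟩
    · have := count_sum_le (RSym.op :: r); omega
    · rw [List.take_of_length_le (by omega)]; omega
  set a := RSym.op :: r with ha
  let p0 := Nat.find hex
  obtain ⟨hp02, hp0bal⟩ : 2 ≤ p0 ∧ (a.take p0).count RSym.cl = (a.take p0).count RSym.op :=
    Nat.find_spec hex
  have hmin : ∀ q < p0, ¬ (2 ≤ q ∧ (a.take q).count RSym.cl = (a.take q).count RSym.op) :=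
    fun q hq => Nat.find_min hex hq
  have hstrict : (a.take (p0 - 1)).count RSym.cl < (a.take (p0 - 1)).count RSym.op := by
    by_cases hp2 : p0 = 2
    · rw [hp2]; simp [ha]
    · have h3 : 3 ≤ p0 := by omega
      have h4 := hmin (p0 - 1) (by omega)
      have h5 := hp (p0 - 1)
      have h6 : ¬ ((a.take (p0-1)).count RSym.cl = (a.take (p0-1)).count RSym.op) :=
        fun hxy => h4 ⟨by omega, hxy⟩
      omega
  have hlen : p0 ≤ a.length := by
    by_contra h'
    push_neg at h'
    rw [List.take_of_length_le (by omega : a.length ≤ p0 - 1)] at hstrict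
    omega
  have hget : p0 - 1 < a.length := by omega
  have e1 : a.take p0 = a.take (p0 - 1) ++ (a[p0 - 1]?).toList := by
    rw [show p0 = (p0 - 1) + 1 by omega]
    exact List.take_succ
  rw [List.getElem?_eq_getElem hget] at e1
  have hx : a[p0 - 1]'hget = RSym.cl := by
    rcases h : a[p0 - 1]'hget with _ | _ | _ <;> rw [e1, h] at hp0bal <;> simp at hp0bal <;> omega
  have hr2 : p0 - 2 < r.length := by simp [ha] at hget ⊢; omega
  have hxr : r[p0 - 2]'hr2 = RSym.cl := by
    have h7 : a[p0 - 1]? = r[p0 - 2]? := by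
      rw [show p0 - 1 = (p0 - 2) + 1 by omega, ha]
      simp
    rw [List.getElem?_eq_getElem hget, List.getElem?_eq_getElem hr2] at h7
    have := Option.some.inj h7
    rw [← this, hx]
  have hsplit : r = r.take (p0 - 2) ++ RSym.cl :: r.drop (p0 - 1) := by
    conv_lhs => rw [← List.take_append_drop (p0 - 2) r]
    congr 1
    rw [List.drop_eq_getElem_cons hr2, hxr, show (p0 - 2) + 1 = p0 - 1 by omega]
  have hbtake : a.take (p0 - 1) = RSym.op :: r.take (p0 - 2) := by
    rw [ha, show p0 - 1 = (p0 - 2) + 1 by omega, List.take_succ_cons]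
  have hbal_b : (r.take (p0 - 2)).count RSym.cl = (r.take (p0 - 2)).count RSym.op := by
    have e2 : a.take p0 = RSym.op :: r.take (p0 - 2) ++ [RSym.cl] := by
      rw [e1, hx, hbtake]; rfl
    rw [e2] at hp0bal
    simp at hp0bal
    omega
  have hpre_b : ∀ p : ℕ, ((r.take (p0 - 2)).take p).count RSym.cl ≤
      ((r.take (p0 - 2)).take p).count RSym.op := by
    intro p
    rw [List.take_take]
    set q := min p (p0 - 2) with hq
    have hqle : q ≤ p0 - 2 := min_le_right _ _
    rcases Nat.eq_zero_or_pos q with h0 | h1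
    · rw [h0]; simp
    · have h4 := hmin (q + 1) (by omega)
      have h5 := hp (q + 1)
      have e3 : a.take (q + 1) = RSym.op :: r.take q := by
        rw [ha, List.take_succ_cons]
      rw [e3] at h5
      simp at h5
      by_contra hcon
      push_neg at hcon
      exact h4 ⟨by omega, by rw [e3]; simp; omega⟩
  have hinfb : r.take (p0 - 2) <:+: a :=
    ((List.take_prefix _ _).isInfix).trans ((List.suffix_cons RSym.op r).isInfix)
  have hinfc : r.drop (p0 - 1) <:+: a :=
    ((List.drop_suffix _ _).isInfix).trans ((List.suffix_cons RSym.op r).isInfix)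
  have hnb : ¬ ([RSym.op, RSym.cl] <:+: r.take (p0 - 2)) := fun h' => hn (h'.trans hinfb)
  have hnc : ¬ ([RSym.op, RSym.cl] <:+: r.drop (p0 - 1)) := fun h' => hn (h'.trans hinfc)
  have hpre_c : ∀ p : ℕ, ((r.drop (p0 - 1)).take p).count RSym.cl ≤
      ((r.drop (p0 - 1)).take p).count RSym.op := by
    intro p
    have h5 := hp (p0 + p)
    have e4 : a.take (p0 + p)
        = RSym.op :: (r.take (p0 - 2) ++ RSym.cl :: (r.drop (p0 - 1)).take p) := by
      rw [ha, show p0 + p = ((p0 - 1) + p) + 1 by omega, List.take_succ_cons]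
      congr 1
      conv_lhs => rw [hsplit]
      rw [List.take_append]
      have hlb : (r.take (p0 - 2)).length = p0 - 2 := by rw [List.length_take]; omega
      rw [List.take_of_length_le (by omega : (r.take (p0 - 2)).length ≤ p0 - 1 + p), hlb,
        show p0 - 1 + p - (p0 - 2) = p + 1 by omega, List.take_succ_cons]
    rw [e4] at h5
    simp at h5
    omega
  have hr_o : r.count RSym.op
      = (r.take (p0 - 2)).count RSym.op + (r.drop (p0 - 1)).count RSym.op := by
    conv_lhs => rw [hsplit]
    simp
  have hr_c : r.count RSym.cl
      = (r.take (p0 - 2)).count RSym.cl + 1 + (r.drop (p0 - 1)).count RSym.cl := by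
    conv_lhs => rw [hsplit]
    simp
    omega
  rw [ha] at ho hc hl
  simp at ho hc hl
  have hbal_c : (r.drop (p0 - 1)).count RSym.cl = (r.drop (p0 - 1)).count RSym.op := by
    omega
  have hrlen : r.length = (r.take (p0 - 2)).length + 1 + (r.drop (p0 - 1)).length := by
    conv_lhs => rw [hsplit]
    simp
    omega
  refine ⟨r.take (p0 - 2), r.drop (p0 - 1), hsplit, ?_, ⟨rfl, rfl, hbal_b, hpre_b, hnb⟩,
    ⟨rfl, rfl, hbal_c, hpre_c, hnc⟩, by omega, hbal_c, by omega⟩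
  intro h0
  apply hn
  refine ⟨[], r.drop (p0 - 1), ?_⟩
  rw [ha]
  conv_rhs => rw [hsplit, h0]
  rfl

lemma noOC_cons {x : RSym} {l : List RSym} (h : ¬ ([RSym.op, RSym.cl] <:+: (x :: l))) :
    ¬ ([RSym.op, RSym.cl] <:+: l) := fun h' => h (List.infix_cons h')

lemma isRNA_of_st {n m : ℕ} {t : List RSym} (h : isRNA n m (RSym.st :: t)) :
    isRNA (n - 1) m t := by
  obtain ⟨h1, h2, h3, h4, h5⟩ := h
  refine ⟨by simp at h1; omega, by simpa using h2, by simpa using h3, fun p => ?_, noOC_cons h5⟩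
  have := h4 (p + 1)
  simpa using this

lemma len_lower : ∀ n m : ℕ, ∀ a : List RSym, isRNA n m a → 1 ≤ m → 2 * m + 1 ≤ n := by
  intro n
  induction n using Nat.strong_induction_on with
  | _ n ih =>
    intro m a h hm
    have hl := h.1
    cases a with
    | nil =>
      have := h.2.1
      simp at hl this
      omega
    | cons x t =>
      have hlen : t.length + 1 = n := by simpa using hl
      cases x with
      | cl =>
        have := h.2.2.2.1 1
        simp at this
      | st =>
        have h' := isRNA_of_st h
        have := ih (n - 1) (by omega) m t h' hm
        omega
      | op =>
        obtain ⟨b, c, ht, hne, hb, hc, hsum, hbalc, hn⟩ := exists_split h hm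
        have hcc : 2 * (c.count RSym.op) ≤ c.length := by
          have := count_sum_le c
          omega
        have hbb : 2 * (b.count RSym.op) + 1 ≤ b.length := by
          rcases Nat.eq_zero_or_pos (b.count RSym.op) with h0 | h1
          · have : 1 ≤ b.length := List.length_pos_iff.2 hne
            omega
          · exact ih b.length (by omega) _ b hb h1
        omega

lemma split_unique_aux {b b' c c' : List RSym} (hlen : b.length ≤ b'.length)
    (heq : b ++ RSym.cl :: c = b' ++ RSym.cl :: c')
    (hbal : b.count RSym.cl = b.count RSym.op)
    (hpre' : ∀ p : ℕ, (b'.take p).count RSym.cl ≤ (b'.take p).count RSym.op) :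
    b = b' ∧ c = c' := by
  have htake : b = b'.take b.length := by
    have h1 : (b ++ RSym.cl :: c).take b.length = b := by
      rw [List.take_append]
      simp
    have h2 : (b' ++ RSym.cl :: c').take b.length = b'.take b.length := by
      rw [List.take_append]
      simp [Nat.sub_eq_zero_of_le hlen]
    have h3 := congrArg (List.take b.length) heq
    rw [h1, h2] at h3
    exact h3
  have hb' : b' = b ++ b'.drop b.length := by
    conv_lhs => rw [← List.take_append_drop b.length b', ← htake]
  rcases hd : b'.drop b.length with _ | ⟨y, d⟩
  · rw [hd] at hb'
    simp at hb'
    subst hb'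
    simp at heq
    exact ⟨rfl, heq⟩
  · rw [hd] at hb'
    exfalso
    rw [hb'] at heq
    rw [List.append_assoc] at heq
    have h3 := List.append_cancel_left heq
    have hy : y = RSym.cl := by
      have := congrArg (fun l => l.head?) h3
      simpa using this.symm
    have h4 := hpre' (b.length + 1)
    rw [hb', hy] at h4
    rw [List.take_append,
      List.take_of_length_le (by omega : b.length ≤ b.length + 1),
      show b.length + 1 - b.length = 1 by omega] at h4
    simp at h4
    omega

lemma prefOK_glue {b c : List RSym} (hbal : b.count RSym.cl = b.count RSym.op)
    (hb : ∀ p : ℕ, (b.take p).count RSym.cl ≤ (b.take p).count RSym.op)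
    (hc : ∀ p : ℕ, (c.take p).count RSym.cl ≤ (c.take p).count RSym.op) :
    ∀ p : ℕ, (((RSym.op :: b ++ RSym.cl :: c)).take p).count RSym.cl ≤
      (((RSym.op :: b ++ RSym.cl :: c)).take p).count RSym.op := by
  intro p
  cases p with
  | zero => simp
  | succ q =>
    have e : (RSym.op :: b ++ RSym.cl :: c).take (q + 1)
        = RSym.op :: ((b ++ RSym.cl :: c).take q) := rfl
    rw [e, List.take_append]
    rcases le_or_gt q b.length with hq | hq
    · have h0 : q - b.length = 0 := by omega
      have := hb q
      rw [h0]
      simp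
      omega
    · have h1 : b.take q = b := List.take_of_length_le (by omega)
      have h2 : q - b.length = (q - b.length - 1) + 1 := by omega
      rw [h1, h2]
      have := hc (q - b.length - 1)
      simp
      omega

lemma noOC_of_infix {l₁ l₂ : List RSym} (h : l₁ <:+: l₂)
    (h2 : ¬ ([RSym.op, RSym.cl] <:+: l₂)) : ¬ ([RSym.op, RSym.cl] <:+: l₁) :=
  fun h' => h2 (h'.trans h)

lemma ne_concat_op {b : List RSym} (hbal : b.count RSym.cl = b.count RSym.op)
    (hpre : ∀ p : ℕ, (b.take p).count RSym.cl ≤ (b.take p).count RSym.op)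
    (b0 : List RSym) : b ≠ b0 ++ [RSym.op] := by
  intro h
  subst h
  have h1 := hpre b0.length
  rw [List.take_left] at h1
  simp at hbal
  omega

lemma noOC_append_aux : ∀ (b c : List RSym),
    ¬ ([RSym.op, RSym.cl] <:+: b) → ¬ ([RSym.op, RSym.cl] <:+: c) →
    (∀ b0, b ≠ b0 ++ [RSym.op]) →
    ¬ ([RSym.op, RSym.cl] <:+: (b ++ RSym.cl :: c)) := by
  intro b
  induction b with
  | nil =>
    intro c _ hc _ h
    rcases List.infix_cons_iff.1 h with h | h
    · rcases List.cons_prefix_cons.1 h with ⟨h1, _⟩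
      exact absurd h1 (by decide)
    · exact hc h
  | cons x b' ih =>
    intro c hb hc hlast h
    rcases List.infix_cons_iff.1 h with h | h
    · rcases List.cons_prefix_cons.1 h with ⟨hx, h2⟩
      cases b' with
      | nil => exact hlast [] (by simp [← hx])
      | cons y b'' =>
        rcases List.cons_prefix_cons.1 h2 with ⟨hy, _⟩
        exact hb ⟨[], b'', by simp [← hx, ← hy]⟩
    · exact ih c (noOC_cons hb) hc
        (fun b0 hb0 => hlast (x :: b0) (by rw [hb0]; rfl)) h

lemma isRNA_glue {k1 m1 k2 m2 : ℕ} {b c : List RSym} (hb : isRNA k1 m1 b)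
    (hc : isRNA k2 m2 c) (hne : b ≠ []) :
    isRNA (k1 + k2 + 2) (m1 + m2 + 1) (RSym.op :: b ++ RSym.cl :: c) := by
  obtain ⟨hbl, hbo, hbc, hbp, hbn⟩ := hb
  obtain ⟨hcl, hco, hcc, hcp, hcn⟩ := hc
  refine ⟨by simp [hbl, hcl]; try omega, by simp [hbo, hco]; try omega,
    by simp [hbc, hcc]; try omega, prefOK_glue (by omega) hbp hcp, ?_⟩
  intro h
  rcases List.infix_cons_iff.1 h with h | h
  · rcases List.cons_prefix_cons.1 h with ⟨_, h2⟩
    cases b with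
    | nil => exact hne rfl
    | cons y b' =>
      rcases List.cons_prefix_cons.1 h2 with ⟨hy, _⟩
      have := hbp 1
      rw [← hy] at this
      simp at this
  · exact noOC_append_aux b c hbn hcn (ne_concat_op (by omega) hbp) h

lemma split_unique {b b' c c' : List RSym}
    (heq : b ++ RSym.cl :: c = b' ++ RSym.cl :: c')
    (hbal : b.count RSym.cl = b.count RSym.op)
    (hbal' : b'.count RSym.cl = b'.count RSym.op)
    (hpre : ∀ p : ℕ, (b.take p).count RSym.cl ≤ (b.take p).count RSym.op)
    (hpre' : ∀ p : ℕ, (b'.take p).count RSym.cl ≤ (b'.take p).count RSym.op) :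
    b = b' ∧ c = c' := by
  rcases le_total b.length b'.length with h | h
  · exact split_unique_aux h heq hbal hpre'
  · obtain ⟨h1, h2⟩ := split_unique_aux h heq.symm hbal' hpre
    exact ⟨h1.symm, h2.symm⟩

lemma isRNA_st {n m : ℕ} {t : List RSym} (h : isRNA n m t) :
    isRNA (n + 1) m (RSym.st :: t) := by
  obtain ⟨h1, h2, h3, h4, h5⟩ := h
  refine ⟨by simp [h1], by simpa using h2, by simpa using h3, fun p => ?_, fun hinf => ?_⟩
  · cases p with
    | zero => simp
    | succ q => simpa using h4 q
  · rcases List.infix_cons_iff.1 hinf with h | h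
    · rcases List.cons_prefix_cons.1 h with ⟨h', _⟩
      exact absurd h' (by decide)
    · exact h5 h

/-- For `n ≥ 1` and `m ≥ 1`, there is a bijection between `A_{n,m}` and the disjoint union of
`A_{n-1,m}` together with, for each pair `(i,j)` with `0 ≤ i ≤ m-1` and
`2i ≤ j ≤ n - 2(m-i) - 1`, the product `A_{n-2-j, m-1-i} × A_{j,i}`.  Explicitly, the word
`'*' ++ b` of `A_{n,m}` corresponds to `b ∈ A_{n-1,m}`, and the word
`'(' ++ b ++ ')' ++ c` of `A_{n,m}` (whose matching `')'` is at position `n - j`, with `i`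
bracket pairs after it) corresponds to the pair `(b, c) ∈ A_{n-2-j, m-1-i} × A_{j,i}`. -/
theorem rna_structural_bijection (n m : ℕ) (hn : 1 ≤ n) (hm : 1 ≤ m) :
    ∃ e : RNAset n m ≃
        (RNAset (n - 1) m ⊕
          Σ p : Idx n m, RNAset (n - 2 - p.1.2) (m - 1 - p.1.1) × RNAset p.1.2 p.1.1),
      (∀ b : RNAset (n - 1) m, (e.symm (Sum.inl b)).1 = RSym.st :: b.1) ∧
      (∀ q : Σ p : Idx n m, RNAset (n - 2 - p.1.2) (m - 1 - p.1.1) × RNAset p.1.2 p.1.1,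
        (e.symm (Sum.inr q)).1 = RSym.op :: q.2.1.1 ++ RSym.cl :: q.2.2.1) := by
  classical
  have hst : ∀ b : RNAset (n - 1) m, isRNA n m (RSym.st :: b.1) := by
    intro b
    have := isRNA_st b.2
    rwa [Nat.sub_add_cancel hn] at this
  have hglue : ∀ q : (Σ p : Idx n m, RNAset (n - 2 - p.1.2) (m - 1 - p.1.1) × RNAset p.1.2 p.1.1),
      isRNA n m (RSym.op :: q.2.1.1 ++ RSym.cl :: q.2.2.1) := by
    rintro ⟨⟨⟨i, j⟩, hij1, hij2, hij3⟩, b, c⟩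
    have hjn : j + 3 ≤ n := by omega
    have hbne : b.1 ≠ [] := by
      intro h0
      have hlb := b.2.1
      rw [h0] at hlb
      simp at hlb
      omega
    have hg := isRNA_glue b.2 c.2 hbne
    rw [show n - 2 - j + j + 2 = n by omega, show m - 1 - i + i + 1 = m by omega] at hg
    exact hg
  let g : (RNAset (n - 1) m ⊕
      Σ p : Idx n m, RNAset (n - 2 - p.1.2) (m - 1 - p.1.1) × RNAset p.1.2 p.1.1) → RNAset n m :=
    Sum.elim (fun b => ⟨RSym.st :: b.1, hst b⟩)
      (fun q => ⟨RSym.op :: q.2.1.1 ++ RSym.cl :: q.2.2.1, hglue q⟩)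
  have hinj : Function.Injective g := by
    rintro (⟨lb, hlb⟩ | ⟨⟨⟨i, j⟩, hij⟩, ⟨lb, hb⟩, ⟨lc, hc⟩⟩)
      (⟨lb', hlb'⟩ | ⟨⟨⟨i', j'⟩, hij'⟩, ⟨lb', hb'⟩, ⟨lc', hc'⟩⟩) hxy
    · have h' : RSym.st :: lb = RSym.st :: lb' := congrArg Subtype.val hxy
      injection h' with h1 h2
      subst h2
      rfl
    · have h' : RSym.st :: lb = RSym.op :: (lb' ++ RSym.cl :: lc') := congrArg Subtype.val hxy
      simp at h'
    · have h' : RSym.op :: (lb ++ RSym.cl :: lc) = RSym.st :: lb' := congrArg Subtype.val hxy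
      simp at h'
    · have h' : RSym.op :: (lb ++ RSym.cl :: lc) = RSym.op :: (lb' ++ RSym.cl :: lc') :=
        congrArg Subtype.val hxy
      injection h' with h1 h2
      have hbo : List.count RSym.op lb = m - 1 - i := hb.2.1
      have hbc : List.count RSym.cl lb = m - 1 - i := hb.2.2.1
      have hbo' : List.count RSym.op lb' = m - 1 - i' := hb'.2.1
      have hbc' : List.count RSym.cl lb' = m - 1 - i' := hb'.2.2.1
      have hpre : ∀ p : ℕ, (lb.take p).count RSym.cl ≤ (lb.take p).count RSym.op := hb.2.2.2.1
      have hpre' : ∀ p : ℕ, (lb'.take p).count RSym.cl ≤ (lb'.take p).count RSym.op :=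
        hb'.2.2.2.1
      obtain ⟨hbeq, hceq⟩ := split_unique h2 (by omega) (by omega) hpre hpre'
      subst hbeq
      subst hceq
      have e1 : List.count RSym.op lc = i := hc.2.1
      have e2 : List.count RSym.op lc = i' := hc'.2.1
      have e3 : lc.length = j := hc.1
      have e4 : lc.length = j' := hc'.1
      have hi : i = i' := by omega
      have hj : j = j' := by omega
      subst hi
      subst hj
      rfl
  have hsurj : Function.Surjective g := by
    rintro ⟨l, hl⟩
    match l, hl with
    | [], hl => exact absurd hl.1 (by simp; omega)
    | RSym.cl :: t, hl =>
      have := hl.2.2.2.1 1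
      simp at this
    | RSym.st :: t, hl =>
      exact ⟨Sum.inl ⟨t, isRNA_of_st hl⟩, Subtype.ext rfl⟩
    | RSym.op :: t, hl =>
      obtain ⟨b, c, ht, hne, hb, hc, hsum, hbalc, hn2⟩ := exists_split hl hm
      have hbb : 2 * (b.count RSym.op) + 1 ≤ b.length := by
        rcases Nat.eq_zero_or_pos (b.count RSym.op) with h0 | h1
        · have : 1 ≤ b.length := List.length_pos_iff.2 hne
          omega
        · exact len_lower b.length _ b hb h1
      have hb' : isRNA (n - 2 - c.length) (m - 1 - c.count RSym.op) b := by
        rw [show n - 2 - c.length = b.length by omega,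
          show m - 1 - c.count RSym.op = b.count RSym.op by omega]
        exact hb
      refine ⟨Sum.inr ⟨⟨(c.count RSym.op, c.length), by omega,
        by have := count_sum_le c; omega, by omega⟩, ⟨b, hb'⟩, ⟨c, hc⟩⟩, ?_⟩
      apply Subtype.ext
      show RSym.op :: b ++ RSym.cl :: c = RSym.op :: t
      rw [ht]
      rfl
  refine ⟨(Equiv.ofBijective g ⟨hinj, hsurj⟩).symm, fun b => ?_, fun q => ?_⟩
  · simp only [Equiv.symm_symm]
    rfl
  · simp only [Equiv.symm_symm]
    rfl
end

section
/- For all integers n > m ≥ 0, the integer n - m divides the product C(n-m, m) · C(n-m, m+1) of binomial coefficients. -/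
/-- For all `n > m ≥ 0`, the integer `n - m` divides the product
`C(n-m, m) · C(n-m, m+1)` of binomial coefficients. -/
theorem sub_dvd_choose_mul_choose (n m : ℕ) (h : m < n) :
    (n - m) ∣ Nat.choose (n - m) m * Nat.choose (n - m) (m + 1) := by
  set k := n - m with hk
  have hk1 : 1 ≤ k := by omega
  have h1 : k ∣ (m + 1) * (Nat.choose k m * Nat.choose k (m + 1)) := by
    have := Nat.add_one_mul_choose_eq (k - 1) m
    rw [show k - 1 + 1 = k from by omega] at this
    -- this : k * (k-1).choose m = k.choose (m+1) * (m+1)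
    refine ⟨(k - 1).choose m * Nat.choose k m, ?_⟩
    rw [show (m + 1) * (k.choose m * k.choose (m + 1)) =
        k.choose (m + 1) * (m + 1) * k.choose m from by ring, ← this]
    ring
  have h2 : k ∣ m * (Nat.choose k m * Nat.choose k (m + 1)) := by
    rcases Nat.eq_zero_or_pos m with hm | hm
    · simp [hm]
    · have := Nat.add_one_mul_choose_eq (k - 1) (m - 1)
      rw [show k - 1 + 1 = k from by omega, show m - 1 + 1 = m from by omega] at this
      refine ⟨(k - 1).choose (m - 1) * Nat.choose k (m + 1), ?_⟩
      rw [show m * (k.choose m * k.choose (m + 1)) =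
          k.choose m * m * k.choose (m + 1) from by ring, ← this]
      ring
  have := Nat.dvd_sub h1 h2
  simpa [Nat.succ_mul, Nat.add_sub_cancel_left, add_mul] using this
end

section
/- For all integers n ≥ m ≥ 1, the integer n divides the product C(n, m-1) · C(n, m) of binomial coefficients; consequently the Narayana number N_n^m := (1/n) · C(n, m-1) · C(n, m) is a natural number. -/
/-- For all `n ≥ m ≥ 1`, `n` divides the product `C(n, m-1) · C(n, m)` of binomial
coefficients; consequently the Narayana number `N_n^m = (1/n) · C(n, m-1) · C(n, m)`
is a natural number. -/
theorem narayana_natural (n m : ℕ) (hm : 1 ≤ m) (hmn : m ≤ n) :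
    n ∣ Nat.choose n (m - 1) * Nat.choose n m ∧
      ∃ N : ℕ, (N : ℚ) = (1 / (n : ℚ)) * (Nat.choose n (m - 1) : ℚ) * (Nat.choose n m : ℚ) := by
  obtain ⟨n', rfl⟩ : ∃ n', n = n' + 1 := ⟨n - 1, by omega⟩
  obtain ⟨m', rfl⟩ : ∃ m', m = m' + 1 := ⟨m - 1, by omega⟩
  set P := Nat.choose (n' + 1) (m' + 1 - 1) * Nat.choose (n' + 1) (m' + 1) with hP
  have key1 : (n' + 1) * (Nat.choose n' m') = Nat.choose (n' + 1) (m' + 1) * (m' + 1) :=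
    Nat.add_one_mul_choose_eq n' m'
  have key2 : Nat.choose n' m' * (n' + 1) = Nat.choose (n' + 1) m' * (n' + 1 - m') :=
    Nat.choose_mul_succ_eq n' m'
  have h1 : (n' + 1) ∣ (m' + 1) * P := by
    refine ⟨Nat.choose n' m' * Nat.choose (n' + 1) m', ?_⟩
    simp only [hP, Nat.add_sub_cancel]
    calc (m' + 1) * (Nat.choose (n' + 1) m' * Nat.choose (n' + 1) (m' + 1))
        = (Nat.choose (n' + 1) (m' + 1) * (m' + 1)) * Nat.choose (n' + 1) m' := by ring
      _ = ((n' + 1) * Nat.choose n' m') * Nat.choose (n' + 1) m' := by rw [key1]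
      _ = (n' + 1) * (Nat.choose n' m' * Nat.choose (n' + 1) m') := by ring
  have h2 : (n' + 1) ∣ (n' + 1 - m') * P := by
    refine ⟨Nat.choose n' m' * Nat.choose (n' + 1) (m' + 1), ?_⟩
    simp only [hP, Nat.add_sub_cancel]
    calc (n' + 1 - m') * (Nat.choose (n' + 1) m' * Nat.choose (n' + 1) (m' + 1))
        = (Nat.choose (n' + 1) m' * (n' + 1 - m')) * Nat.choose (n' + 1) (m' + 1) := by ring
      _ = (Nat.choose n' m' * (n' + 1)) * Nat.choose (n' + 1) (m' + 1) := by rw [key2]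
      _ = (n' + 1) * (Nat.choose n' m' * Nat.choose (n' + 1) (m' + 1)) := by ring
  have hdvd : (n' + 1) ∣ P := by
    have h3 : (n' + 1) ∣ (n' + 2) * P := by
      have := Nat.dvd_add h1 h2
      have heq : (m' + 1) * P + (n' + 1 - m') * P = (n' + 2) * P := by
        have hm'n' : m' ≤ n' := by omega
        rw [← Nat.add_mul]
        congr 1
        omega
      rwa [heq] at this
    have h4 : (n' + 2) * P = (n' + 1) * P + P := by ring
    rw [h4] at h3
    exact (Nat.dvd_add_right ⟨P, rfl⟩).mp h3
  refine ⟨hdvd, ⟨P / (n' + 1), ?_⟩⟩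
  have hne : ((n' + 1 : ℕ) : ℚ) ≠ 0 := by positivity
  have hcast : ((P / (n' + 1) : ℕ) : ℚ) = (P : ℚ) / ((n' + 1 : ℕ) : ℚ) :=
    Nat.cast_div hdvd hne
  rw [hcast]
  push_cast [hP]
  push_cast at hne
  field_simp
end

section
/- For all integers n ≥ m ≥ 1, the number of Dyck paths of semilength n with exactly m peaks equals the Narayana number N_n^m = (1/n) · C(n, m-1) · C(n, m). -/
/-- The alphabet {U, D} of Dyck path steps. -/
inductive Step : Type
  | U : Step
  | D : Step
  deriving DecidableEq

/-- `isDyck n w` : `w` is a Dyck path of semilength `n`, i.e. a word of length `2n` over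
`{U, D}` with `n` occurrences of `U` and `n` occurrences of `D` such that every prefix
contains at least as many `U`'s as `D`'s. -/
def isDyck (n : ℕ) (w : List Step) : Prop :=
  w.length = 2 * n ∧
  w.count Step.U = n ∧
  w.count Step.D = n ∧
  (∀ p : ℕ, (w.take p).count Step.D ≤ (w.take p).count Step.U)

/-- `peaks w` : the number of indices `i` with `w_i = U` and `w_{i+1} = D`. -/
def peaks (w : List Step) : ℕ := (w.zip w.tail).count (Step.U, Step.D)

/-!
Count the ballot words (every prefix has at least as many `U`'s as `D`'s) by their numbers of
`U`'s and `D`'s, their number of peaks and their last letter. Appending a letter changes these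
statistics in a controlled way, since a peak is created exactly when `D` follows `U`; this gives
a recursion, which is also satisfied by the reflection-principle formulas `ballotU` and `ballotD`
thanks to Pascal's rule. A Dyck path with a peak is a ballot word with `n` letters of each kind
ending in `D`, so its count is `ballotD n n (m - 1) = C(n-1, m-1) C(n, m) - C(n, m-1) C(n-1, m)`,
which is the Narayana number.
-/

open Step

namespace DyckPath

instance : Finite Step :=
  Finite.of_injective (fun s : Step => s = U) (by intro a b; cases a <;> cases b <;> simp)

def IsBallot (w : List Step) : Prop :=
  ∀ p, (w.take p).count D ≤ (w.take p).count U

lemma count_U_add_count_D (w : List Step) : w.count U + w.count D = w.length := by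
  induction w with
  | nil => rfl
  | cons a t ih => cases a <;> simp [← ih, add_right_comm, ← add_assoc]

lemma peaks_cons_cons (a b : Step) (t : List Step) :
    peaks (a :: b :: t) = peaks (b :: t) + if a = U ∧ b = D then 1 else 0 := by
  simp only [peaks, List.tail_cons, List.zip_cons_cons, List.count_cons, beq_iff_eq,
    Prod.mk.injEq]

lemma peaks_append_singleton (w : List Step) (c : Step) :
    peaks (w ++ [c]) = peaks w + if w.getLast? = some U ∧ c = D then 1 else 0 := by
  induction w with
  | nil => simp [peaks]
  | cons a t ih =>
    cases t with
    | nil => simp [peaks, List.count_cons]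
    | cons b s =>
      simp only [List.cons_append, peaks_cons_cons, List.getLast?_cons_cons] at ih ⊢
      rw [ih]
      omega

lemma isBallot_append_singleton {w : List Step} {c : Step} :
    IsBallot (w ++ [c]) ↔ IsBallot w ∧ (w ++ [c]).count D ≤ (w ++ [c]).count U := by
  refine ⟨fun h => ⟨fun p => ?_, by simpa only [List.take_length] using h (w ++ [c]).length⟩,
    fun ⟨hw, hc⟩ p => ?_⟩
  · rcases le_total p w.length with hp | hp
    · simpa [List.take_append_of_le_length hp] using h p
    · simpa [List.take_of_length_le hp, List.take_append_of_le_length le_rfl] using h w.length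
  · rcases le_or_gt p w.length with hp | hp
    · simpa [List.take_append_of_le_length hp] using hw p
    · rwa [List.take_of_length_le (by simpa using Nat.succ_le_of_lt hp)]

lemma IsBallot.count_D_le {w : List Step} (hw : IsBallot w) : w.count D ≤ w.count U := by
  simpa using hw w.length

lemma IsBallot.peaks_pos {w : List Step} (hw : IsBallot w) (hlast : w.getLast? = some D) :
    0 < peaks w := by
  induction w using List.reverseRecOn with
  | nil => simp at hlast
  | append_singleton v c ih =>
    obtain rfl : c = D := by simpa using hlast
    have hv := (isBallot_append_singleton.1 hw).1
    rw [peaks_append_singleton]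
    rcases hv' : v.getLast? with _ | _ | _
    · rw [List.getLast?_eq_none_iff.1 hv'] at hw
      simpa using hw 1
    · simp
    · exact (ih hv hv').trans_le (Nat.le_add_right _ _)

lemma ncard_getLast?_eq_some {α : Type*} (Q : List α → Prop) (c : α) :
    {w | Q w ∧ w.getLast? = some c}.ncard = {v | Q (v ++ [c])}.ncard := by
  have : {w | Q w ∧ w.getLast? = some c} = (· ++ [c]) '' {v | Q (v ++ [c])} := by
    ext w
    simp only [Set.mem_ofPred_eq, Set.mem_image, List.getLast?_eq_some_iff]
    constructor
    · rintro ⟨hw, v, rfl⟩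
      exact ⟨v, hw, rfl⟩
    · rintro ⟨v, hv, rfl⟩
      exact ⟨hv, v, rfl⟩
  rw [this, Set.ncard_image_of_injective _ (List.append_left_injective _)]

open Classical in
lemma ncard_eq_add_getLast? {Q : List Step → Prop} (hQ : {w | Q w}.Finite) :
    {w | Q w}.ncard = {w | Q w ∧ w.getLast? = some U}.ncard
      + {w | Q w ∧ w.getLast? = some D}.ncard + if Q [] then 1 else 0 := by
  have hsplit : {w | Q w} = ({w | Q w ∧ w.getLast? = some U} ∪
      {w | Q w ∧ w.getLast? = some D}) ∪ {w | Q w ∧ w = []} := by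
    ext w
    rcases List.eq_nil_or_concat w with rfl | ⟨v, c, rfl⟩
    · simp
    · cases c <;> simp
  have hnil : {w | Q w ∧ w = []}.ncard = if Q [] then 1 else 0 := by
    split_ifs with h
    · convert Set.ncard_singleton ([] : List Step)
      ext w
      exact ⟨And.right, fun hw => ⟨hw ▸ h, hw⟩⟩
    · convert Set.ncard_empty (List Step)
      ext w
      exact ⟨fun ⟨hw, hw_nil⟩ => h (hw_nil ▸ hw), False.elim⟩
  have hfin (R : List Step → Prop) : {w | Q w ∧ R w}.Finite := hQ.subset fun _ h => h.1
  rw [hsplit, Set.ncard_union_eq _ ((hfin _).union (hfin _)) (hfin _),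
    Set.ncard_union_eq _ (hfin _) (hfin _), hnil]
  · exact Set.disjoint_left.2 fun w h1 h2 => by simp_all
  · exact Set.disjoint_left.2 fun w h1 h2 => by simp_all

def ballotWords (i j p : ℕ) : Set (List Step) :=
  {w | IsBallot w ∧ w.count U = i ∧ w.count D = j ∧ peaks w = p}

noncomputable def ballotCount (i j p : ℕ) (c : Step) : ℕ :=
  {w | w ∈ ballotWords i j p ∧ w.getLast? = some c}.ncard

lemma finite_ballotWords (i j p : ℕ) : (ballotWords i j p).Finite :=
  (List.finite_length_eq Step (i + j)).subset fun w ⟨_, hU, hD, _⟩ => by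
    simp [← count_U_add_count_D, hU, hD]

lemma nil_mem_ballotWords {i j p : ℕ} :
    [] ∈ ballotWords i j p ↔ i = 0 ∧ j = 0 ∧ p = 0 := by
  simp [ballotWords, IsBallot, peaks, eq_comm]

lemma append_U_mem_ballotWords {v : List Step} {i j p : ℕ} :
    v ++ [U] ∈ ballotWords (i + 1) j p ↔ v ∈ ballotWords i j p := by
  simp only [ballotWords, Set.mem_ofPred_eq, isBallot_append_singleton, peaks_append_singleton]
  constructor
  · rintro ⟨⟨hv, -⟩, hU, hD, hp⟩
    exact ⟨hv, by simpa using hU, by simpa using hD, by simpa using hp⟩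
  · rintro ⟨hv, rfl, rfl, rfl⟩
    refine ⟨⟨hv, ?_⟩, by simp, by simp, by simp⟩
    simpa using hv.count_D_le.trans (Nat.le_succ _)

lemma append_D_mem_ballotWords {v : List Step} {i j : ℕ} (hji : j < i) (p : ℕ) :
    v ++ [D] ∈ ballotWords i (j + 1) (p + if v.getLast? = some U then 1 else 0) ↔
      v ∈ ballotWords i j p := by
  simp only [ballotWords, Set.mem_ofPred_eq, isBallot_append_singleton, peaks_append_singleton]
  constructor
  · rintro ⟨⟨hv, -⟩, hU, hD, hp⟩
    exact ⟨hv, by simpa using hU, by simpa using hD, by simpa using hp⟩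
  · rintro ⟨hv, rfl, rfl, rfl⟩
    exact ⟨⟨hv, by simpa using hji⟩, by simp, by simp, by simp⟩

lemma ballotCount_eq_zero {i j p : ℕ} {c : Step}
    (h : ∀ w ∈ ballotWords i j p, w.getLast? ≠ some c) : ballotCount i j p c = 0 := by
  rw [ballotCount, Set.ncard_eq_zero (s := {w | w ∈ ballotWords i j p ∧ w.getLast? = some c})
    ((finite_ballotWords i j p).subset fun _ hw => hw.1)]
  exact Set.eq_empty_of_forall_notMem fun w hw => h w hw.1 hw.2

lemma ballotCount_eq_zero_of_lt {i j : ℕ} (h : i < j) (p : ℕ) (c : Step) :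
    ballotCount i j p c = 0 :=
  ballotCount_eq_zero fun _ ⟨hw, hU, hD, _⟩ _ => by
    have := hw.count_D_le
    omega

lemma ballotCount_zero_left_U (j p : ℕ) : ballotCount 0 j p U = 0 :=
  ballotCount_eq_zero fun _ ⟨_, hU, _, _⟩ hl => by
    have := List.count_pos_iff.2 (List.mem_of_getLast? hl)
    omega

lemma ballotCount_zero_mid_D (i p : ℕ) : ballotCount i 0 p D = 0 :=
  ballotCount_eq_zero fun _ ⟨_, _, hD, _⟩ hl => by
    have := List.count_pos_iff.2 (List.mem_of_getLast? hl)
    omega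

lemma ballotCount_zero_peaks_D (i j : ℕ) : ballotCount i j 0 D = 0 :=
  ballotCount_eq_zero fun _ ⟨hw, _, _, hp⟩ hl => (hw.peaks_pos hl).ne' hp

lemma ballotCount_succ_U (i j p : ℕ) :
    ballotCount (i + 1) j p U =
      ballotCount i j p U + ballotCount i j p D + if i = 0 ∧ j = 0 ∧ p = 0 then 1 else 0 := by
  rw [ballotCount, ncard_getLast?_eq_some]
  simp only [append_U_mem_ballotWords]
  rw [ncard_eq_add_getLast? (Q := (· ∈ ballotWords i j p)) (finite_ballotWords i j p)]
  simp only [nil_mem_ballotWords]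
  rfl

lemma ballotCount_succ_D {i j : ℕ} (hji : j < i) (q : ℕ) :
    ballotCount i (j + 1) (q + 1) D = ballotCount i j q U + ballotCount i j (q + 1) D := by
  rw [ballotCount, ncard_getLast?_eq_some, ncard_eq_add_getLast?
    ((finite_ballotWords i (j + 1) (q + 1)).preimage (List.append_left_injective _).injOn)]
  have hU : {v | v ++ [D] ∈ ballotWords i (j + 1) (q + 1) ∧ v.getLast? = some U} =
      {v | v ∈ ballotWords i j q ∧ v.getLast? = some U} := by
    ext v
    refine and_congr_left fun hv => ?_
    simpa [hv] using append_D_mem_ballotWords (v := v) hji q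
  have hD : {v | v ++ [D] ∈ ballotWords i (j + 1) (q + 1) ∧ v.getLast? = some D} =
      {v | v ∈ ballotWords i j (q + 1) ∧ v.getLast? = some D} := by
    ext v
    refine and_congr_left fun hv => ?_
    simpa [hv] using append_D_mem_ballotWords (v := v) hji (q + 1)
  have hnil : [] ++ [D] ∉ ballotWords i (j + 1) (q + 1) := fun ⟨_, hU, _⟩ => by
    simp [← hU] at hji
  rw [hU, hD, if_neg hnil, Nat.add_zero]
  rfl

/-- `choosePred n k = (n - 1).choose k`, except that `choosePred 0 k = 0` (truncated subtraction
would give `Nat.choose 0 k`). -/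
def choosePred : ℕ → ℕ → ℕ
  | 0, _ => 0
  | n + 1, k => n.choose k

@[simp] lemma choosePred_zero (k : ℕ) : choosePred 0 k = 0 := rfl

@[simp] lemma choosePred_succ (n k : ℕ) : choosePred (n + 1) k = n.choose k := rfl

lemma choosePred_add_choosePred_succ (n k : ℕ) :
    choosePred n k + choosePred n (k + 1) = n.choose (k + 1) := by
  cases n <;> simp [Nat.choose_succ_succ]

/-- Reflection principle: `choosePred i p * j.choose p` counts all words with `i` U's, `j` D's and
`p` peaks that end in `U`, and the subtracted term counts those that are not ballot words.
`ballotD i j p` is the analogue for words ending in `D` with `p + 1` peaks. -/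
def ballotU (i j p : ℕ) : ℤ := choosePred i p * j.choose p - i.choose p * choosePred j p

def ballotD (i j p : ℕ) : ℤ :=
  choosePred i p * j.choose (p + 1) - i.choose p * choosePred j (p + 1)

lemma ballotU_self (n p : ℕ) : ballotU n n p = 0 := by
  rw [ballotU]
  ring

lemma ballotU_succ_zero (i j : ℕ) :
    ballotU (i + 1) j 0 = ballotU i j 0 + if i = 0 then 1 else 0 := by
  cases i with
  | zero => simp [ballotU, sub_eq_neg_add]
  | succ i => simp [ballotU]

lemma ballotU_succ_succ (i j p : ℕ) :
    ballotU (i + 1) j (p + 1) = ballotU i j (p + 1) + ballotD i j p := by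
  have hi : (choosePred i p : ℤ) + choosePred i (p + 1) = i.choose (p + 1) :=
    mod_cast choosePred_add_choosePred_succ i p
  simp only [ballotU, ballotD, choosePred_succ, Nat.choose_succ_succ', Nat.cast_add]
  linear_combination -(j.choose (p + 1) : ℤ) * hi

lemma ballotD_succ (i j p : ℕ) : ballotD i (j + 1) p = ballotU i j p + ballotD i j p := by
  have hj : (choosePred j p : ℤ) + choosePred j (p + 1) = j.choose (p + 1) :=
    mod_cast choosePred_add_choosePred_succ j p
  simp only [ballotU, ballotD, choosePred_succ, Nat.choose_succ_succ', Nat.cast_add]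
  linear_combination (i.choose p : ℤ) * hj

lemma ballotCount_D_eq_of_U {i : ℕ}
    (hU : ∀ j ≤ i, ∀ p, (ballotCount i j p U : ℤ) = ballotU i j p) :
    ∀ j ≤ i, ∀ p, (ballotCount i j (p + 1) D : ℤ) = ballotD i j p := by
  intro j hj p
  induction j generalizing p with
  | zero => simp [ballotCount_zero_mid_D, ballotD]
  | succ j ih =>
    rw [ballotCount_succ_D (by omega), Nat.cast_add, hU j (by omega), ih (by omega), ballotD_succ]

lemma ballotCount_succ_U_eq {i : ℕ}
    (hU : ∀ j ≤ i, ∀ p, (ballotCount i j p U : ℤ) = ballotU i j p)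
    (hD : ∀ j ≤ i, ∀ p, (ballotCount i j (p + 1) D : ℤ) = ballotD i j p) :
    ∀ j ≤ i + 1, ∀ p, (ballotCount (i + 1) j p U : ℤ) = ballotU (i + 1) j p := by
  intro j hj p
  rcases hj.lt_or_eq with hj | rfl
  · have hj : j ≤ i := by omega
    rw [ballotCount_succ_U]
    cases p with
    | zero =>
      rw [ballotU_succ_zero, ballotCount_zero_peaks_D, ← hU j hj 0]
      by_cases hi : i = 0
      · obtain rfl : j = 0 := by omega
        simp [hi]
      · simp [hi]
    | succ p =>
      rw [ballotU_succ_succ, if_neg (by omega)]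
      push_cast
      rw [hU j hj, hD j hj]
      ring
  · rw [ballotCount_succ_U, ballotCount_eq_zero_of_lt (by omega),
      ballotCount_eq_zero_of_lt (by omega), if_neg (by omega), ballotU_self]
    rfl

theorem ballotCount_U_eq (i : ℕ) :
    ∀ j ≤ i, ∀ p, (ballotCount i j p U : ℤ) = ballotU i j p := by
  induction i with
  | zero =>
    intro j hj p
    obtain rfl : j = 0 := by omega
    simp [ballotCount_zero_left_U, ballotU_self]
  | succ i ih => exact ballotCount_succ_U_eq ih (ballotCount_D_eq_of_U ih)

lemma mul_ballotD_self {n q : ℕ} (hq : q < n) :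
    (n : ℤ) * ballotD n n q = n.choose q * n.choose (q + 1) := by
  obtain ⟨r, rfl⟩ : ∃ r, n = q + r + 1 := ⟨n - q - 1, by omega⟩
  have e1 := Nat.add_one_mul_choose_eq (q + r) q
  have e2 := Nat.choose_succ_right_eq (q + r + 1) q
  have e3 := Nat.choose_succ_right_eq (q + r) q
  rw [show q + r + 1 - q = r + 1 by omega] at e2
  rw [show q + r - q = r by omega] at e3
  simp only [ballotD, choosePred_succ]
  refine mul_right_cancel₀ (show ((q : ℤ) + 1) ≠ 0 by positivity) ?_
  zify at e1 e2 e3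
  push_cast
  linear_combination
    ((q + r + 1).choose (q + 1) * ((q : ℤ) + 1) - (q + r + 1).choose q * (r : ℤ)) * e1
      + ((q + r + 1).choose (q + 1) * ((q : ℤ) + 1)) * e2
      - ((q + r + 1 : ℤ) * (q + r + 1).choose q) * e3

lemma setOf_isDyck_peaks_eq {n m : ℕ} (hm : m ≠ 0) :
    {w | isDyck n w ∧ peaks w = m} = {w | w ∈ ballotWords n n m ∧ w.getLast? = some D} := by
  ext w
  simp only [Set.mem_ofPred_eq, isDyck, ballotWords]
  constructor
  · rintro ⟨⟨-, hU, hD, hw⟩, hp⟩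
    refine ⟨⟨hw, hU, hD, hp⟩, ?_⟩
    induction w using List.reverseRecOn with
    | nil => exact absurd hp.symm hm
    | append_singleton v c _ =>
      cases c
      · have := (isBallot_append_singleton.1 hw).1.count_D_le
        simp only [List.count_append, List.count_singleton_self, List.count_singleton, beq_iff_eq,
          reduceCtorEq, if_false, add_zero] at hU hD
        omega
      · simp
  · rintro ⟨⟨hw, hU, hD, hp⟩, -⟩
    exact ⟨⟨by rw [← count_U_add_count_D]; omega, hU, hD, hw⟩, hp⟩

end DyckPath

open DyckPath

/-- For all `n ≥ m ≥ 1`, the number of Dyck paths of semilength `n` with exactly `m` peaks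
equals the Narayana number `N_n^m = (1/n) · C(n, m-1) · C(n, m)`. -/
theorem dyck_peaks_count_eq_narayana (n m : ℕ) (hm : 1 ≤ m) (hmn : m ≤ n) :
    ({w : List Step | isDyck n w ∧ peaks w = m}.ncard : ℚ) =
      (1 / (n : ℚ)) * (Nat.choose n (m - 1) : ℚ) * (Nat.choose n m : ℚ) := by
  obtain ⟨q, rfl⟩ : ∃ q, m = q + 1 := ⟨m - 1, by omega⟩
  have hn : (n : ℚ) ≠ 0 := Nat.cast_ne_zero.2 (by omega)
  have hnarayana : (ballotCount n n (q + 1) D : ℤ) * n = n.choose q * n.choose (q + 1) := by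
    rw [mul_comm, ballotCount_D_eq_of_U (ballotCount_U_eq n) n le_rfl q]
    exact mul_ballotD_self (by omega)
  rw [setOf_isDyck_peaks_eq q.succ_ne_zero, ← ballotCount, Nat.add_sub_cancel]
  field_simp
  exact_mod_cast hnarayana
end

section
/- For all integers n > m ≥ 0, the number of RNA secondary structure words of length n with m base-pairs equals the number of Dyck paths of semilength n - m with exactly m + 1 peaks; that is, |A_{n,m}| = N_{n-m}^{m+1}. -/
/-!
Reading the brackets of an RNA word as `U` and `D` and each unpaired base `*` as a peak `UD`
identifies words without a factor `()` with arbitrary `U`/`D` words; since `()` is excluded, the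
peaks of the image are exactly the stars. So `A_{n,m}` corresponds to the Dyck paths of
semilength `n - m` with `n - 2m` peaks, and the theorem becomes the Narayana symmetry
`N_k^j = N_k^{k+1-j}`. Under the standard bijection between Dyck paths and binary trees the
peaks are the leaves that are left children; mirroring a nonempty tree with `k` nodes exchanges
left and right leaves, of which there are `k + 1` in total.
-/

open List

section Ballot
variable {α : Type*} [DecidableEq α] {u d : α}

def Ballot (u d : α) (s : ℕ) (l : List α) : Prop :=
  ∀ p, (l.take p).count d ≤ s + (l.take p).count u

lemma ballot_cons_iff (hud : u ≠ d) {s : ℕ} {x : α} {l : List α} :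
    Ballot u d s (x :: l) ↔
      (x = d → 1 ≤ s) ∧
        Ballot u d (s + (if x = u then 1 else 0) - (if x = d then 1 else 0)) l := by
  constructor
  · intro h
    refine ⟨fun hx => by simpa [hx, hud.symm] using h 1, fun p => ?_⟩
    have := h (p + 1)
    simp only [take_succ_cons, count_cons, beq_iff_eq] at this
    split_ifs at this ⊢ <;> simp_all <;> omega
  · rintro ⟨hx, h⟩ (_ | p)
    · simp
    · have := h p
      simp only [take_succ_cons, count_cons, beq_iff_eq]
      split_ifs at this ⊢ <;> simp_all <;> omega
end Ballot

lemma List.pair_infix_cons_iff {α : Type*} {x y z : α} {l : List α} :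
    [x, y] <:+: z :: l ↔ (z = x ∧ l.head? = some y) ∨ [x, y] <:+: l := by
  rw [infix_cons_iff, cons_prefix_cons, singleton_prefix_iff_head?_eq_some, eq_comm]

lemma List.count_map_equiv {α β : Type*} [DecidableEq α] [DecidableEq β] (e : α ≃ β)
    (l : List α) (b : β) : (l.map e).count b = l.count (e.symm b) := by
  rw [← count_map_of_injective _ _ e.injective, e.apply_symm_apply]

lemma Step.length_eq_count_add (w : List Step) : w.length = w.count .U + w.count .D := by
  induction w with
  | nil => rfl
  | cons x w ih => cases x <;> simp [ih] <;> omega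

lemma peaks_cons (x : Step) (w : List Step) :
    peaks (x :: w) = peaks w + if x = .U ∧ w.head? = some .D then 1 else 0 := by
  rcases w with _ | ⟨y, w⟩
  · simp [peaks]
  · cases x <;> cases y <;> simp [peaks]

lemma peaks_append (v w : List Step) :
    peaks (v ++ w) =
      peaks v + peaks w + if v.getLast? = some .U ∧ w.head? = some .D then 1 else 0 := by
  induction v with
  | nil => simp [peaks]
  | cons x v ih =>
    rcases v with _ | ⟨y, v⟩
    · rw [singleton_append, peaks_cons]
      simp [peaks]
    · rw [cons_append, peaks_cons x, ih, peaks_cons x]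
      simp only [cons_append, head?_cons, getLast?_cons_cons, Option.some.injEq]
      omega

def RSym.toSteps : RSym → List Step
  | .op => [.U]
  | .cl => [.D]
  | .st => [.U, .D]

def expandStars (a : List RSym) : List Step := a.flatMap RSym.toSteps

def contractPeaks : List Step → List RSym
  | [] => []
  | .U :: .D :: w => .st :: contractPeaks w
  | .U :: w => .op :: contractPeaks w
  | .D :: w => .cl :: contractPeaks w

@[simp] lemma expandStars_nil : expandStars [] = [] := rfl

@[simp] lemma expandStars_cons (x : RSym) (a : List RSym) :
    expandStars (x :: a) = x.toSteps ++ expandStars a := flatMap_cons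

lemma expandStars_contractPeaks (w : List Step) : expandStars (contractPeaks w) = w := by
  fun_induction contractPeaks w <;> simp_all [RSym.toSteps]

lemma head?_expandStars_eq_D_iff {a : List RSym} :
    (expandStars a).head? = some .D ↔ a.head? = some .cl := by
  rcases a with _ | ⟨_ | _ | _, a⟩ <;> simp [RSym.toSteps]

lemma contractPeaks_U_cons {w : List Step} (hw : w.head? ≠ some .D) :
    contractPeaks (.U :: w) = .op :: contractPeaks w := by
  rcases w with _ | ⟨_ | _, w⟩ <;> simp_all [contractPeaks]

lemma contractPeaks_expandStars {a : List RSym} (ha : ¬ [RSym.op, .cl] <:+: a) :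
    contractPeaks (expandStars a) = a := by
  induction a with
  | nil => rfl
  | cons x a ih =>
    rw [pair_infix_cons_iff, not_or] at ha
    rcases x
    · rw [expandStars_cons, RSym.toSteps, singleton_append,
        contractPeaks_U_cons (by simpa [head?_expandStars_eq_D_iff] using ha.1), ih ha.2]
    · simp [RSym.toSteps, contractPeaks, ih ha.2]
    · simp [RSym.toSteps, contractPeaks, ih ha.2]

lemma head?_contractPeaks_eq_cl_iff {w : List Step} :
    (contractPeaks w).head? = some .cl ↔ w.head? = some .D := by
  fun_cases contractPeaks w <;> simp

lemma not_infix_contractPeaks (w : List Step) : ¬ [RSym.op, .cl] <:+: contractPeaks w := by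
  fun_induction contractPeaks w with
  | case3 w hw ih =>
    rw [pair_infix_cons_iff, head?_contractPeaks_eq_cl_iff]
    rcases w with _ | ⟨_ | _, w⟩ <;> simp_all
  | _ => simp_all [pair_infix_cons_iff]

lemma RSym.length_eq_count_add (a : List RSym) :
    a.length = a.count .op + a.count .cl + a.count .st := by
  induction a with
  | nil => rfl
  | cons x a ih => cases x <;> simp [ih] <;> omega

lemma count_U_expandStars (a : List RSym) :
    (expandStars a).count .U = a.count .op + a.count .st := by
  induction a with
  | nil => rfl
  | cons x a ih => cases x <;> simp [RSym.toSteps, ih] <;> omega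

lemma count_D_expandStars (a : List RSym) :
    (expandStars a).count .D = a.count .cl + a.count .st := by
  induction a with
  | nil => rfl
  | cons x a ih => cases x <;> simp [RSym.toSteps, ih] <;> omega

lemma ballot_expandStars_iff {s : ℕ} {a : List RSym} :
    Ballot Step.U .D s (expandStars a) ↔ Ballot RSym.op .cl s a := by
  induction a generalizing s with
  | nil => simp [Ballot]
  | cons x a ih => cases x <;> simp [RSym.toSteps, ballot_cons_iff, ih]

lemma peaks_expandStars {a : List RSym} (ha : ¬ [RSym.op, .cl] <:+: a) :
    peaks (expandStars a) = a.count .st := by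
  induction a with
  | nil => rfl
  | cons x a ih =>
    rw [pair_infix_cons_iff, not_or] at ha
    cases x <;> simp_all [RSym.toSteps, peaks_cons, head?_expandStars_eq_D_iff]

lemma isRNA_iff {n m : ℕ} {a : List RSym} :
    isRNA n m a ↔
      ¬ [RSym.op, .cl] <:+: a ∧ isDyck (n - m) (expandStars a) ∧
        peaks (expandStars a) + 2 * m = n := by
  have hbal := ballot_expandStars_iff (s := 0) (a := a)
  simp only [Ballot, zero_add] at hbal
  have := RSym.length_eq_count_add a
  have := Step.length_eq_count_add (expandStars a)
  have := count_U_expandStars a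
  have := count_D_expandStars a
  constructor
  · rintro ⟨hlen, hop, hcl, hprefix, hpair⟩
    refine ⟨hpair, ⟨by omega, by omega, by omega, hbal.2 hprefix⟩, ?_⟩
    rw [peaks_expandStars hpair]
    omega
  · rintro ⟨hpair, ⟨hlen, hU, hD, hprefix⟩, hpeaks⟩
    rw [peaks_expandStars hpair] at hpeaks
    exact ⟨by omega, by omega, by omega, hbal.1 hprefix, hpair⟩

lemma ncard_setOf_isRNA (n m : ℕ) :
    {a | isRNA n m a}.ncard = {w | isDyck (n - m) w ∧ peaks w + 2 * m = n}.ncard :=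
  Set.ncard_congr (fun a _ => expandStars a) (fun _ ha => (isRNA_iff.1 ha).2)
    (fun a b ha hb hab => by
      rw [← contractPeaks_expandStars (isRNA_iff.1 ha).1,
        ← contractPeaks_expandStars (isRNA_iff.1 hb).1, hab])
    (fun w hw => ⟨contractPeaks w,
      isRNA_iff.2 ⟨not_infix_contractPeaks w, by rwa [expandStars_contractPeaks]⟩,
      expandStars_contractPeaks w⟩)

namespace BinaryTree
variable {α : Type*}

def mirror : BinaryTree α → BinaryTree α
  | nil => nil
  | node a l r => node a r.mirror l.mirror

def numLeftLeaves : BinaryTree α → ℕ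
  | nil => 0
  | node _ nil r => r.numLeftLeaves + 1
  | node _ (node a ll lr) r => (node a ll lr).numLeftLeaves + r.numLeftLeaves

@[simp] lemma mirror_mirror (t : BinaryTree α) : t.mirror.mirror = t := by
  induction t <;> simp_all [mirror]

@[simp] lemma numNodes_mirror (t : BinaryTree α) : t.mirror.numNodes = t.numNodes := by
  induction t <;> simp_all [mirror, numNodes, Nat.add_comm]

lemma numLeftLeaves_add_numLeftLeaves_mirror {t : BinaryTree α} (ht : t ≠ nil) :
    t.numLeftLeaves + t.mirror.numLeftLeaves = t.numNodes + 1 := by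
  induction t with
  | nil => contradiction
  | node a l r ihl ihr =>
    rcases l with _ | ⟨b, ll, lr⟩ <;> rcases r with _ | ⟨c, rl, rr⟩ <;>
      simp_all [numLeftLeaves, mirror, numNodes] <;> omega

end BinaryTree

def Step.equivDyckStep : Step ≃ DyckStep where
  toFun | .U => .U | .D => .D
  invFun | .U => .U | .D => .D
  left_inv s := by cases s <;> rfl
  right_inv s := by cases s <;> rfl

@[simp] lemma Step.equivDyckStep_U : Step.equivDyckStep .U = .U := rfl
@[simp] lemma Step.equivDyckStep_D : Step.equivDyckStep .D = .D := rfl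
@[simp] lemma Step.equivDyckStep_symm_U : Step.equivDyckStep.symm .U = .U := rfl
@[simp] lemma Step.equivDyckStep_symm_D : Step.equivDyckStep.symm .D = .D := rfl

namespace DyckWord
open BinaryTree

def toSteps (p : DyckWord) : List Step := p.toList.map Step.equivDyckStep.symm

@[simp] lemma toSteps_zero : (0 : DyckWord).toSteps = [] := rfl

lemma toSteps_injective : Function.Injective toSteps := fun _ _ h =>
  DyckWord.ext (map_injective_iff.2 Step.equivDyckStep.symm.injective h)

lemma isDyck_iff_exists_toSteps {N : ℕ} {w : List Step} :
    isDyck N w ↔ ∃ p : DyckWord, p.semilength = N ∧ p.toSteps = w := by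
  constructor
  · rintro ⟨-, hU, hD, hprefix⟩
    refine ⟨⟨w.map Step.equivDyckStep, ?_, fun i => ?_⟩, ?_, ?_⟩
    · simp [count_map_equiv, hU, hD]
    · simpa [← map_take, count_map_equiv] using hprefix i
    · simpa [semilength, count_map_equiv] using hU
    · simp [toSteps]
  · rintro ⟨p, rfl, rfl⟩
    refine ⟨?_, count_map_equiv _ _ _, ?_, fun i => ?_⟩
    · simp [toSteps, ← two_mul_semilength_eq_length]
    · rw [toSteps, count_map_equiv]
      exact p.semilength_eq_count_D.symm
    · simpa [toSteps, ← map_take, count_map_equiv] using p.count_D_le_count_U i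

lemma head?_toSteps {p : DyckWord} (hp : p ≠ 0) : p.toSteps.head? = some .U := by
  obtain ⟨x, l, hxl⟩ := exists_cons_of_ne_nil (toList_ne_nil.2 hp)
  have := p.head_eq_U (toList_ne_nil.2 hp)
  simp_all [toSteps]

lemma getLast?_toSteps {p : DyckWord} (hp : p ≠ 0) : p.toSteps.getLast? = some .D := by
  have := p.getLast_eq_D (toList_ne_nil.2 hp)
  simp [toSteps, getLast?_eq_some_getLast (toList_ne_nil.2 hp), this]

lemma peaks_toSteps_add (p q : DyckWord) :
    peaks (p + q).toSteps = peaks p.toSteps + peaks q.toSteps := by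
  have hq : q.toSteps.head? ≠ some .D := by
    rcases eq_or_ne q 0 with rfl | hq
    · simp
    · simp [head?_toSteps hq]
  rw [show (p + q).toSteps = p.toSteps ++ q.toSteps from map_append .., peaks_append]
  simp [hq]

lemma peaks_toSteps_nest {p : DyckWord} (hp : p ≠ 0) :
    peaks p.nest.toSteps = peaks p.toSteps := by
  rw [show p.nest.toSteps = .U :: (p.toSteps ++ [.D]) by simp [nest, toSteps], peaks_cons,
    peaks_append]
  simp [head?_toSteps hp, getLast?_toSteps hp, peaks]

lemma peaks_toSteps_ofTree (t : BinaryTree Unit) :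
    peaks (ofTree t).toSteps = t.numLeftLeaves := by
  induction t with
  | nil => rfl
  | node a l r ihl ihr =>
    rw [ofTree, peaks_toSteps_add, ihr]
    rcases l with _ | ⟨b, ll, lr⟩
    · rw [numLeftLeaves, Nat.add_comm]
      rfl
    · rw [peaks_toSteps_nest (by simp [ofTree, ← toList_ne_nil, nest]), ihl, numLeftLeaves]

lemma peaks_toSteps (p : DyckWord) : peaks p.toSteps = p.toTree.numLeftLeaves := by
  conv_lhs => rw [← ofTree_toTree p]
  exact peaks_toSteps_ofTree _

def mirror (p : DyckWord) : DyckWord := ofTree p.toTree.mirror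

@[simp] lemma mirror_mirror (p : DyckWord) : p.mirror.mirror = p := by
  simp [mirror, toTree_ofTree, ofTree_toTree]

@[simp] lemma semilength_mirror (p : DyckWord) : p.mirror.semilength = p.semilength := by
  rw [← numNodes_toTree, mirror, toTree_ofTree, numNodes_mirror, numNodes_toTree]

lemma peaks_toSteps_add_peaks_toSteps_mirror {p : DyckWord} (hp : p ≠ 0) :
    peaks p.toSteps + peaks p.mirror.toSteps = p.semilength + 1 := by
  have ht : p.toTree ≠ .nil := fun h => hp (by rw [← ofTree_toTree p, h]; rfl)
  rw [peaks_toSteps, peaks_toSteps, mirror, toTree_ofTree,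
    numLeftLeaves_add_numLeftLeaves_mirror ht, numNodes_toTree]

end DyckWord

lemma ncard_setOf_isDyck (N : ℕ) (P : ℕ → Prop) :
    {w | isDyck N w ∧ P (peaks w)}.ncard =
      {p : DyckWord | p.semilength = N ∧ P (peaks p.toSteps)}.ncard := by
  rw [← Set.ncard_image_of_injective _ DyckWord.toSteps_injective]
  congr 1
  ext w
  simp only [Set.mem_image, Set.mem_ofPred_eq, DyckWord.isDyck_iff_exists_toSteps]
  constructor
  · rintro ⟨⟨p, hp, rfl⟩, hP⟩
    exact ⟨p, ⟨hp, hP⟩, rfl⟩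
  · rintro ⟨p, ⟨hp, hP⟩, rfl⟩
    exact ⟨⟨p, hp, rfl⟩, hP⟩

lemma ncard_isDyck_peaks_symm {N : ℕ} (hN : 0 < N) (k : ℕ) :
    {w | isDyck N w ∧ peaks w = k}.ncard = {w | isDyck N w ∧ peaks w + k = N + 1}.ncard := by
  rw [ncard_setOf_isDyck N (· = k), ncard_setOf_isDyck N (· + k = N + 1)]
  have hsum {p : DyckWord} (hp : p.semilength = N) :
      peaks p.toSteps + peaks p.mirror.toSteps = N + 1 := by
    rw [DyckWord.peaks_toSteps_add_peaks_toSteps_mirror (by rintro rfl; simp_all), hp]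
  refine Set.ncard_congr (fun p _ => p.mirror) (fun p ⟨hp, hk⟩ => ?_)
    (fun p q _ _ h => Function.Involutive.injective DyckWord.mirror_mirror h)
    (fun p ⟨hp, hk⟩ => ⟨p.mirror, ⟨by simpa using hp, ?_⟩, p.mirror_mirror⟩)
  · exact ⟨by simpa using hp, by have := hsum hp; omega⟩
  · have := hsum hp
    omega

/-- For all `n > m ≥ 0`, the number of RNA secondary structure words of length `n` with
`m` base-pairs equals the number of Dyck paths of semilength `n - m` with exactly `m + 1`
peaks; that is, `|A_{n,m}| = N_{n-m}^{m+1}`. -/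
theorem rna_count_eq_narayana_dyck_count (n m : ℕ) (h : m < n) :
    {a : List RSym | isRNA n m a}.ncard =
      {w : List Step | isDyck (n - m) w ∧ peaks w = m + 1}.ncard := by
  rw [ncard_setOf_isRNA, ncard_isDyck_peaks_symm (by omega)]
  exact congrArg Set.ncard (Set.ext fun w => and_congr_right fun _ => by omega)
end

section
/- Let S(x,y) = Σ_{n ≥ 0} Σ_{m ≥ 0} S_n^m x^n y^m be the bivariate formal power series over ℚ whose coefficients are S_n^m. Then S satisfies the polynomial equation x²y · S(x,y)² − (1 − x + x²y) · S(x,y) + 1 = 0 in the ring of formal power series in x and y. -/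
/-- The numbers `S_n^m` (OEIS A089732): `S_n^m = (1/(n-m)) · C(n-m, m) · C(n-m, m+1)`
for `n > m ≥ 0`, `S_0^0 = 1`, and `S_n^m = 0` whenever `2m ≥ n` and `n ≥ 1`. -/
def Scoef (n m : ℕ) : ℚ :=
  if m < n then
    ((Nat.choose (n - m) m : ℚ) * (Nat.choose (n - m) (m + 1) : ℚ)) / ((n : ℚ) - (m : ℚ))
  else if n = 0 ∧ m = 0 then 1
  else 0

/-- The bivariate generating function `S(x,y) = Σ_{n ≥ 0} Σ_{m ≥ 0} S_n^m x^n y^m` as a formal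
power series in two commuting variables over `ℚ`: the coefficient of `x^n y^m` is `S_n^m`. -/
noncomputable def Sxy : MvPowerSeries (Fin 2) ℚ := fun d => Scoef (d 0) (d 1)

/-!
Let `A = 1 - x - x²y` (`denom`) and let `C(t) = ∑ Cat_j tʲ` be the Catalan series, so
`C = 1 + t C²`. The series `Ĉ = A⁻¹ C(x³y / A²)` (`catalanPart`) then satisfies
`A Ĉ = 1 + x³y Ĉ²`, which is the claimed equation for `1 + x Ĉ`. It remains to see that
`S = 1 + x Ĉ`. Since `A^{-(r+1)} = ∑ₙ C(r+n, r) (x + x²y)ⁿ`, the coefficient of `xⁿyᵐ` in `Ĉ`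
is `∑ⱼ Cat_j C(n-m, 2j) C(n-m-2j, m-j)`, and a refinement of Touchard's identity (a factorial
computation term by term, followed by Vandermonde's identity) identifies it with `S_{n+1}^m`.
-/

open Finset
open scoped Nat

theorem Nat.sum_range_choose_mul_choose_succ (m n : ℕ) :
    ∑ j ∈ range (m + 1), m.choose j * n.choose (j + 1) = (m + n).choose (m + 1) := by
  rw [add_comm m n, Nat.add_choose_eq, Finset.Nat.sum_antidiagonal_eq_sum_range_succ
    (fun i l ↦ n.choose i * m.choose l), sum_range_succ' _ (m + 1), Nat.sub_zero,
    Nat.choose_eq_zero_of_lt (Nat.lt_succ_self m), mul_zero, add_zero]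
  refine sum_congr rfl fun j hj ↦ ?_
  rw [mul_comm, Nat.succ_sub_succ, Nat.choose_symm (Nat.lt_succ_iff.mp (mem_range.mp hj))]

theorem succ_mul_catalan_mul_choose_mul_choose_add (j b c : ℕ) :
    (2 * j + b + c + 1) * catalan j * (2 * j + b + c).choose (2 * j) * (b + c).choose b =
      (2 * j + b + c + 1).choose (j + b) * (j + b).choose j * (j + c + 1).choose (j + 1) := by
  have hcat : ((catalan j : ℕ) : ℚ) = (2 * j)! / (j ! * (j + 1)!) := by
    have h := congrArg (Nat.cast (R := ℚ)) (succ_mul_catalan_eq_centralBinom j)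
    rw [Nat.centralBinom_eq_two_mul_choose, two_mul, Nat.cast_add_choose, ← two_mul] at h
    push_cast [Nat.factorial_succ] at h ⊢
    field_simp at h ⊢
    linear_combination h
  rw [← Nat.cast_inj (R := ℚ), show 2 * j + b + c = 2 * j + (b + c) by ring,
    show 2 * j + (b + c) + 1 = (j + b) + (j + c + 1) by ring,
    show j + c + 1 = (j + 1) + c by ring]
  push_cast
  rw [hcat, Nat.cast_add_choose, Nat.cast_add_choose, Nat.cast_add_choose, Nat.cast_add_choose,
    Nat.cast_add_choose, show j + b + (j + 1 + c) = 2 * j + (b + c) + 1 by ring,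
    show j + 1 + c = j + c + 1 by ring, Nat.factorial_succ (2 * j + (b + c)),
    Nat.factorial_succ (j + c), Nat.factorial_succ j]
  push_cast
  field_simp
  ring

theorem succ_mul_catalan_mul_choose_mul_choose {K m j : ℕ} (hj : j ≤ m) :
    (K + 1) * catalan j * K.choose (2 * j) * (K - 2 * j).choose (m - j) =
      (K + 1).choose m * m.choose j * (K + 1 - m).choose (j + 1) := by
  by_cases hK : m + j ≤ K
  · obtain ⟨b, rfl⟩ := Nat.exists_eq_add_of_le hj
    obtain ⟨c, rfl⟩ := Nat.exists_eq_add_of_le hK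
    rw [show j + b + j + c = 2 * j + b + c by ring, show 2 * j + b + c - 2 * j = b + c by omega,
      show j + b - j = b by omega, show 2 * j + b + c + 1 - (j + b) = j + c + 1 by omega]
    exact succ_mul_catalan_mul_choose_mul_choose_add j b c
  · rw [Nat.choose_eq_zero_of_lt (show K + 1 - m < j + 1 by omega), mul_zero]
    rcases le_or_gt (2 * j) K with h2j | h2j
    · rw [Nat.choose_eq_zero_of_lt (show K - 2 * j < m - j by omega), mul_zero]
    · rw [Nat.choose_eq_zero_of_lt h2j, mul_zero, zero_mul]

/-- `C(K+1, m) C(K+1, m+1) / (K+1)` is a Narayana number; summing over `m` gives Touchard's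
identity `Cat_(K+1) = ∑ⱼ C(K, 2j) 2^(K-2j) Cat_j`. -/
theorem succ_mul_sum_catalan_mul_choose_mul_choose (K m : ℕ) :
    (K + 1) * ∑ j ∈ range (m + 1), catalan j * K.choose (2 * j) * (K - 2 * j).choose (m - j) =
      (K + 1).choose m * (K + 1).choose (m + 1) := by
  have hterm : ∀ j ∈ range (m + 1),
      (K + 1) * (catalan j * K.choose (2 * j) * (K - 2 * j).choose (m - j)) =
        (K + 1).choose m * (m.choose j * (K + 1 - m).choose (j + 1)) := by
    intro j hj
    simp only [← mul_assoc]
    exact succ_mul_catalan_mul_choose_mul_choose (Nat.lt_succ_iff.mp (mem_range.mp hj))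
  rw [mul_sum, sum_congr rfl hterm, ← mul_sum, Nat.sum_range_choose_mul_choose_succ]
  rcases le_or_gt m (K + 1) with hm | hm
  · rw [Nat.add_sub_cancel' hm]
  · rw [Nat.choose_eq_zero_of_lt hm, zero_mul, zero_mul]

namespace MvPowerSeries

variable {σ R : Type*} [CommSemiring R]

theorem coeff_X_pow_mul' (s : σ) (n : ℕ) (f : MvPowerSeries σ R) (d : σ →₀ ℕ) :
    coeff d (X s ^ n * f) = if n ≤ d s then coeff (d - Finsupp.single s n) f else 0 := by
  classical
  rw [X_pow_eq, coeff_monomial_mul, one_mul]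
  simp only [Finsupp.single_le_iff]

end MvPowerSeries

namespace PowerSeries

variable {τ R S : Type*} [CommRing R] [CommRing S] [Algebra R S]

theorem subst_eq_sum_add_pow_mul {a : MvPowerSeries τ S} (ha : HasSubst a) (f : PowerSeries R)
    (N : ℕ) : f.subst a = ∑ j ∈ range N, coeff j f • a ^ j +
      a ^ N * (mk fun i ↦ coeff (i + N) f).subst a := by
  conv_lhs => rw [eq_X_pow_mul_shift_add_trunc N f]
  rw [subst_add ha, subst_mul ha, subst_pow ha, subst_X ha, subst_coe ha, Polynomial.aeval_def,
    eval₂_trunc_eq_sum_range, add_comm]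
  simp only [Algebra.smul_def]

end PowerSeries

namespace NarayanaSeries

open MvPowerSeries

variable {k : Type*} [Field k]

noncomputable def denom : MvPowerSeries (Fin 2) k := 1 - X 0 - X 0 ^ 2 * X 1

theorem denom_mul_inv_denom : (denom : MvPowerSeries (Fin 2) k) * denom⁻¹ = 1 :=
  MvPowerSeries.mul_inv_cancel _ (by simp [denom])

theorem inv_denom_mul_cancel_left (f : MvPowerSeries (Fin 2) k) : denom⁻¹ * (denom * f) = f := by
  rw [← mul_assoc, mul_comm denom⁻¹, denom_mul_inv_denom, one_mul]

/-- `compW g = ∑ₙ g n (x + x²y)ⁿ`, read off from `(x + x²y)ⁿ = ∑ᵢ C(n, i) x^(n+i) yⁱ`. -/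
def compW (g : ℕ → k) : MvPowerSeries (Fin 2) k :=
  fun d ↦ g (d 0 - d 1) * (d 0 - d 1).choose (d 1)

theorem coeff_compW (g : ℕ → k) (d : Fin 2 →₀ ℕ) :
    coeff d (compW g) = g (d 0 - d 1) * (d 0 - d 1).choose (d 1) := rfl

theorem coeff_X_pow_mul_X_pow_mul_compW (a b : ℕ) (g : ℕ → k) (d : Fin 2 →₀ ℕ) :
    coeff d (X 0 ^ a * X 1 ^ b * compW g) = if a ≤ d 0 ∧ b ≤ d 1 then
      g (d 0 - a - (d 1 - b)) * (d 0 - a - (d 1 - b)).choose (d 1 - b) else 0 := by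
  rw [mul_assoc, coeff_X_pow_mul', coeff_X_pow_mul']
  by_cases ha : a ≤ d 0 <;> by_cases hb : b ≤ d 1 <;> simp [ha, hb, coeff_compW]

theorem denom_mul_compW {g g' : ℕ → k} (h0 : g' 0 = g 0)
    (hsucc : ∀ n, g' (n + 1) = g (n + 1) - g n) : denom * compW g = compW g' := by
  ext d
  have hdenom : denom * compW g =
      compW g - X 0 ^ 1 * X 1 ^ 0 * compW g - X 0 ^ 2 * X 1 ^ 1 * compW g := by
    rw [denom]; ring
  rw [hdenom, map_sub, map_sub, coeff_X_pow_mul_X_pow_mul_compW, coeff_X_pow_mul_X_pow_mul_compW,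
    coeff_compW, coeff_compW]
  generalize d 0 = n, d 1 = m
  rcases lt_or_ge m n with hmn | hnm
  · obtain ⟨K, rfl⟩ := Nat.exists_eq_add_of_lt hmn
    rw [if_pos (by omega), show m + K + 1 - m = K + 1 by omega,
      show m + K + 1 - 1 - (m - 0) = K by omega, Nat.sub_zero, hsucc]
    rcases m with _ | m
    · simp
    · rw [if_pos (by omega), show m + 1 + K + 1 - 2 - (m + 1 - 1) = K by omega,
        Nat.add_sub_cancel, Nat.choose_succ_succ]
      push_cast
      ring
  · rw [Nat.sub_eq_zero_of_le hnm, h0]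
    split_ifs <;> first | omega | simp (disch := omega) [Nat.choose_eq_zero_of_lt]

theorem compW_ite_eq_one : compW (fun n ↦ if n = 0 then (1 : k) else 0) = 1 := by
  ext d
  rw [coeff_compW, coeff_one]
  by_cases hd : d = 0
  · simp [hd]
  · have : d 0 ≠ 0 ∨ d 1 ≠ 0 := by
      by_contra! h
      exact hd (Finsupp.ext fun i ↦ by fin_cases i <;> simp [h.1, h.2])
    rw [if_neg hd]
    split_ifs with h
    · rw [h, Nat.choose_eq_zero_of_lt (by omega), Nat.cast_zero, mul_zero]
    · rw [zero_mul]

theorem inv_denom_pow_succ (r : ℕ) :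
    (denom⁻¹ : MvPowerSeries (Fin 2) k) ^ (r + 1) = compW fun n ↦ ((r + n).choose r : k) := by
  induction r with
  | zero =>
    rw [pow_one, ← mul_one denom⁻¹, ← compW_ite_eq_one,
      ← denom_mul_compW (g := fun n ↦ ((0 + n).choose 0 : k)) (by simp) (by simp),
      inv_denom_mul_cancel_left]
  | succ r ih =>
    rw [pow_succ', ih, ← denom_mul_compW (g := fun n ↦ ((r + 1 + n).choose (r + 1) : k))
      (by simp) (fun n ↦ ?_), inv_denom_mul_cancel_left]
    rw [show r + 1 + (n + 1) = r + n + 1 + 1 by ring, show r + 1 + n = r + n + 1 by ring,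
      show r + (n + 1) = r + n + 1 by ring, Nat.choose_succ_succ]
    push_cast
    ring

noncomputable def catalanVar : MvPowerSeries (Fin 2) k := X 0 ^ 3 * X 1 * denom⁻¹ ^ 2

theorem hasSubst_catalanVar : PowerSeries.HasSubst (catalanVar : MvPowerSeries (Fin 2) k) :=
  PowerSeries.HasSubst.of_constantCoeff_zero (by simp [catalanVar])

noncomputable def catalanPart : MvPowerSeries (Fin 2) k :=
  denom⁻¹ * (PowerSeries.catalanSeries.map (Nat.castRingHom k)).subst catalanVar

theorem denom_mul_catalanPart :
    denom * catalanPart = 1 + X 0 ^ 3 * X 1 * (catalanPart : MvPowerSeries (Fin 2) k) ^ 2 := by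
  have hc := congrArg (PowerSeries.substAlgHom (hasSubst_catalanVar (k := k)))
    (congrArg (PowerSeries.map (Nat.castRingHom k)) PowerSeries.catalanSeries_sq_mul_X_add_one)
  simp only [map_add, map_mul, map_pow, map_one, PowerSeries.map_X, PowerSeries.substAlgHom_X,
    PowerSeries.coe_substAlgHom] at hc
  rw [catalanPart]
  generalize (PowerSeries.catalanSeries.map (Nat.castRingHom k)).subst
    (catalanVar : MvPowerSeries (Fin 2) k) = c at hc ⊢
  rw [catalanVar] at hc
  have hD : (denom : MvPowerSeries (Fin 2) k) * denom⁻¹ = 1 := denom_mul_inv_denom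
  linear_combination c * hD - hc

theorem coeff_X_pow_mul_X_pow_mul_inv_denom_pow {j : ℕ} {d : Fin 2 →₀ ℕ} (hj : j ≤ d 1) :
    coeff d (X 0 ^ (3 * j) * X 1 ^ j * denom⁻¹ ^ (2 * j + 1) : MvPowerSeries (Fin 2) k) =
      ((d 0 - d 1).choose (2 * j) * (d 0 - d 1 - 2 * j).choose (d 1 - j) : ℕ) := by
  rw [inv_denom_pow_succ, coeff_X_pow_mul_X_pow_mul_compW]
  generalize d 0 = n, d 1 = m at hj ⊢
  by_cases h3j : 3 * j ≤ n
  · rw [if_pos ⟨h3j, hj⟩, show n - 3 * j - (m - j) = n - m - 2 * j by omega]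
    by_cases h2j : 2 * j ≤ n - m
    · rw [Nat.add_sub_cancel' h2j, Nat.choose_symm_of_eq_add (Nat.add_sub_cancel' h2j).symm,
        Nat.cast_mul]
    · rw [Nat.choose_eq_zero_of_lt (show n - m - 2 * j < m - j by omega),
        Nat.choose_eq_zero_of_lt (not_le.mp h2j)]
      simp
  · rw [if_neg (by omega), Nat.choose_eq_zero_of_lt (show n - m < 2 * j by omega)]
    simp

/-- Only the Catalan numbers up to index `d 1` contribute, as `catalanVar` is divisible by `y`. -/
theorem coeff_catalanPart (d : Fin 2 →₀ ℕ) :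
    coeff d (catalanPart : MvPowerSeries (Fin 2) k) = ((∑ j ∈ range (d 1 + 1),
      catalan j * (d 0 - d 1).choose (2 * j) * (d 0 - d 1 - 2 * j).choose (d 1 - j) : ℕ) : k) := by
  rw [Nat.cast_sum, catalanPart, PowerSeries.subst_eq_sum_add_pow_mul hasSubst_catalanVar _ (d 1 + 1), mul_add,
    map_add, mul_sum, map_sum]
  have htail : ∀ g : MvPowerSeries (Fin 2) k, denom⁻¹ * (catalanVar ^ (d 1 + 1) * g) =
      X 1 ^ (d 1 + 1) * (X 0 ^ (3 * (d 1 + 1)) * denom⁻¹ ^ (2 * (d 1 + 1) + 1) * g) :=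
    fun g ↦ by rw [catalanVar]; ring
  rw [htail, coeff_X_pow_mul', if_neg (by omega), add_zero]
  refine sum_congr rfl fun j hj ↦ ?_
  rw [mul_smul_comm, coeff_smul, PowerSeries.coeff_map, PowerSeries.catalanSeries_coeff,
    Nat.coe_castRingHom,
    show (denom⁻¹ : MvPowerSeries (Fin 2) k) * catalanVar ^ j =
      X 0 ^ (3 * j) * X 1 ^ j * denom⁻¹ ^ (2 * j + 1) by rw [catalanVar]; ring,
    coeff_X_pow_mul_X_pow_mul_inv_denom_pow (Nat.lt_succ_iff.mp (mem_range.mp hj))]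
  push_cast
  ring

theorem Scoef_succ_mul (n m : ℕ) :
    Scoef (n + 1) m * (n - m + 1 : ℕ) =
      ((n - m + 1).choose m * (n - m + 1).choose (m + 1) : ℕ) := by
  unfold Scoef
  split_ifs with hm h0
  · have hden : ((n + 1 : ℕ) : ℚ) - m = (n - m + 1 : ℕ) := by
      rw [Nat.cast_add, Nat.cast_add, Nat.cast_sub (by omega)]
      ring
    rw [show n + 1 - m = n - m + 1 by omega, hden, div_mul_cancel₀ _ (by positivity)]
    push_cast
    ring
  · omega
  · rw [Nat.sub_eq_zero_of_le (by omega), Nat.choose_eq_zero_of_lt (by omega : 1 < m + 1)]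
    simp

theorem Sxy_eq_one_add_X_mul_catalanPart : Sxy = 1 + X 0 * catalanPart := by
  ext d
  rw [map_add, coeff_one, ← pow_one (X 0 : MvPowerSeries (Fin 2) ℚ), coeff_X_pow_mul']
  change Scoef (d 0) (d 1) = _
  rcases hd0 : d 0 with _ | n
  · have hd : d = 0 ↔ d 1 = 0 := by
      refine ⟨fun h ↦ by simp [h], fun h ↦ Finsupp.ext fun i ↦ ?_⟩
      fin_cases i <;> simp [hd0, h]
    by_cases h1 : d 1 = 0 <;> simp [Scoef, hd, h1]
  · have hd : d ≠ 0 := fun h ↦ by simp [h] at hd0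
    rw [if_neg hd, if_pos (by omega), zero_add, coeff_catalanPart]
    simp only [Finsupp.tsub_apply, Finsupp.single_eq_same, Finsupp.single_apply, hd0,
      zero_ne_one, if_false, Nat.sub_zero, Nat.add_sub_cancel]
    generalize d 1 = m
    apply mul_right_cancel₀ (show ((n - m + 1 : ℕ) : ℚ) ≠ 0 by positivity)
    rw [Scoef_succ_mul, mul_comm _ ((n - m + 1 : ℕ) : ℚ), ← Nat.cast_mul,
      succ_mul_sum_catalan_mul_choose_mul_choose]

end NarayanaSeries

/-- `S(x,y)` satisfies `x²y·S(x,y)² − (1 − x + x²y)·S(x,y) + 1 = 0` in `ℚ[[x,y]]`. -/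
theorem Sxy_algebraic_equation :
    (MvPowerSeries.X 0) ^ 2 * (MvPowerSeries.X 1) * Sxy ^ 2 -
        (1 - MvPowerSeries.X 0 + (MvPowerSeries.X 0) ^ 2 * MvPowerSeries.X 1) * Sxy + 1 =
      (0 : MvPowerSeries (Fin 2) ℚ) := by
  have h := NarayanaSeries.denom_mul_catalanPart (k := ℚ)
  rw [NarayanaSeries.denom] at h
  rw [NarayanaSeries.Sxy_eq_one_add_X_mul_catalanPart]
  linear_combination (-MvPowerSeries.X 0) * h
end

section
/- For all integers n ≥ 1 and m ≥ 1, the map ((i, j), (b, c)) ↦ '(' ++ b ++ ')' ++ c is a bijection from the disjoint union, over pairs of integers (i, j) with 0 ≤ i ≤ m-1 and 2i ≤ j ≤ n - 2(m-i) - 1, of the products A_{n-2-j, m-1-i} × A_{j, i}, onto the subset of A_{n, m} consisting of those words whose first symbol is '('. Moreover, for such a word a = '(' ++ b ++ ')' ++ c with b of length n-2-j, the ')' at position n - j is the matching bracket of the initial '(' of a. -/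
/-- The map `((i,j),(b,c)) ↦ '(' ++ b ++ ')' ++ c` on the disjoint union over `(i,j)` of the
products `A_{n-2-j, m-1-i} × A_{j, i}`. -/
def glue (n m : ℕ)
    (q : Σ p : Idx n m, RNAset (n - 2 - p.1.2) (m - 1 - p.1.1) × RNAset p.1.2 p.1.1) :
    List RSym :=
  RSym.op :: q.2.1.1 ++ RSym.cl :: q.2.2.1


/-!
Cutting a word `a = '(' ++ t` at its first return to height zero writes `t = b ++ ')' ++ c`,
where `b` and `c` are again RNA words; this is the inverse of `glue`. The only non-obvious
constraint on the index `j = |c|` is `2 (m - 1 - i) < |b|`: the word `b` is nonempty (since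
`a` has no factor `'()'`), and a nonempty RNA word contains a `'*'`, because in a word over
`{'(', ')'}` the last `'('` before the first `')'` would be followed by it.
-/

open List

lemma count_op_add_count_cl_add_count_st (l : List RSym) :
    l.count RSym.op + l.count RSym.cl + l.count RSym.st = l.length := by
  induction l with
  | nil => rfl
  | cons x l ih =>
    cases x <;> simp only [count_cons, length_cons, beq_iff_eq, reduceCtorEq, ↓reduceIte] <;>
      omega

lemma pair_infix_append {α : Type*} {x y : α} {l₁ l₂ : List α}
    (h : [x, y] <:+: l₁ ++ l₂) :
    [x, y] <:+: l₁ ∨ [x, y] <:+: l₂ ∨ (l₁.getLast? = some x ∧ l₂.head? = some y) := by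
  rcases infix_append_iff.1 h with h | h | ⟨s, t, hst, hs, ht⟩
  · exact Or.inl h
  · exact Or.inr (Or.inl h)
  · rcases s with _ | ⟨a, _ | ⟨b, s⟩⟩
    · obtain rfl : t = [x, y] := by simpa using hst.symm
      exact Or.inr (Or.inl ht.isInfix)
    · rcases t with _ | ⟨c, t⟩
      · simp at hst
      · obtain ⟨rfl, rfl, rfl⟩ : x = a ∧ y = c ∧ t = [] := by simpa using hst
        obtain ⟨u, rfl⟩ := hs
        obtain ⟨v, rfl⟩ := ht
        simp
    · obtain ⟨rfl, rfl, rfl, rfl⟩ : x = a ∧ y = b ∧ s = [] ∧ t = [] := by simpa using hst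
      exact Or.inl hs.isInfix

def IsBallot (l : List RSym) : Prop :=
  ∀ p, (l.take p).count RSym.cl ≤ (l.take p).count RSym.op

namespace IsBallot

variable {l l₁ l₂ : List RSym}

lemma head?_ne_cl (h : IsBallot l) : l.head? ≠ some RSym.cl := by
  intro hl
  obtain ⟨t, rfl⟩ := head?_eq_some_iff.1 hl
  simpa using h 1

lemma getLast?_ne_op (h : IsBallot l) (heq : l.count RSym.op = l.count RSym.cl) :
    l.getLast? ≠ some RSym.op := by
  intro hl
  obtain ⟨t, rfl⟩ := getLast?_eq_some_iff.1 hl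
  have hcount : t.count RSym.op + 1 = t.count RSym.cl := by simpa using heq
  have := h t.length
  rw [take_left] at this
  omega

lemma append (h₁ : IsBallot l₁) (heq : l₁.count RSym.op = l₁.count RSym.cl)
    (h₂ : IsBallot l₂) : IsBallot (l₁ ++ l₂) := by
  intro p
  rw [take_append, count_append, count_append]
  rcases le_total p l₁.length with hp | hp
  · simpa [Nat.sub_eq_zero_of_le hp] using h₁ p
  · rw [take_of_length_le hp]
    have := h₂ (p - l₁.length)
    omega

lemma of_append (h : IsBallot (l₁ ++ l₂)) (heq : l₁.count RSym.op = l₁.count RSym.cl) :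
    IsBallot l₂ := by
  intro p
  have := h (l₁.length + p)
  rw [take_length_add_append, count_append, count_append] at this
  omega

lemma wrap (h : IsBallot l) : IsBallot (RSym.op :: l ++ [RSym.cl]) := by
  rintro (_ | p)
  · simp
  · have hcl := (take_sublist (p - l.length) [RSym.cl]).count_le RSym.cl
    have := h p
    rw [cons_append, take_succ_cons, take_append]
    simp only [count_append, count_cons, count_nil, beq_iff_eq, reduceCtorEq, ↓reduceIte]
      at hcl ⊢
    omega

end IsBallot

lemma st_mem_of_head?_eq_op {l : List RSym} (hhead : l.head? = some RSym.op)
    (hcl : RSym.cl ∈ l) (hno : ¬ [RSym.op, RSym.cl] <:+: l) : RSym.st ∈ l := by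
  induction l with
  | nil => simp at hhead
  | cons x t ih =>
    obtain rfl : x = RSym.op := by simpa using hhead
    rcases t with _ | ⟨y, t⟩
    · simp at hcl
    · cases y
      · exact mem_cons_of_mem _ (ih rfl (by simpa using hcl)
          fun h => hno (h.trans (suffix_cons _ _).isInfix))
      · exact absurd ⟨[], t, rfl⟩ hno
      · simp

lemma st_mem_of_isBallot {l : List RSym} (hne : l ≠ []) (h : IsBallot l)
    (heq : l.count RSym.op = l.count RSym.cl) (hno : ¬ [RSym.op, RSym.cl] <:+: l) :
    RSym.st ∈ l := by
  rcases l with _ | ⟨x, t⟩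
  · exact absurd rfl hne
  · cases x
    · refine st_mem_of_head?_eq_op rfl (count_pos_iff.1 ?_) hno
      have : 0 < (RSym.op :: t).count RSym.op := count_pos_iff.2 mem_cons_self
      omega
    · exact absurd rfl h.head?_ne_cl
    · exact mem_cons_self

lemma isRNA.two_mul_lt {n m : ℕ} {l : List RSym} (h : isRNA n m l) (hne : l ≠ []) :
    2 * m < n := by
  obtain ⟨rfl, rfl, hcl, hb, hno⟩ := h
  have := count_pos_iff.2 (st_mem_of_isBallot hne hb hcl.symm hno)
  have := count_op_add_count_cl_add_count_st l
  omega

section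

variable {b c : List RSym}

lemma not_infix_cons_append_cons (hne : b ≠ []) (hb : IsBallot b)
    (heq : b.count RSym.op = b.count RSym.cl) (hbno : ¬ [RSym.op, RSym.cl] <:+: b)
    (hcno : ¬ [RSym.op, RSym.cl] <:+: c) :
    ¬ [RSym.op, RSym.cl] <:+: RSym.op :: b ++ RSym.cl :: c := by
  have hsingle (x : RSym) : ¬ [RSym.op, RSym.cl] <:+: [x] := fun h => by simpa using h.length_le
  intro h
  rcases pair_infix_append h with h | h | ⟨hlast, -⟩
  · rcases pair_infix_append (l₁ := [RSym.op]) (l₂ := b) h with h | h | ⟨-, hhead⟩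
    · exact hsingle _ h
    · exact hbno h
    · exact hb.head?_ne_cl hhead
  · rcases pair_infix_append (l₁ := [RSym.cl]) (l₂ := c) h with h | h | ⟨hlast, -⟩
    · exact hsingle _ h
    · exact hcno h
    · simp at hlast
  · obtain ⟨x, hx⟩ := Option.ne_none_iff_exists'.1 (mt getLast?_eq_none_iff.1 hne)
    rw [getLast?_cons, hx] at hlast
    exact hb.getLast?_ne_op heq (by simpa using hx.trans hlast)

lemma isRNA_cons_append_cons {nb mb nc mc : ℕ} (hb : isRNA nb mb b) (hc : isRNA nc mc c)
    (hne : b ≠ []) : isRNA (nb + nc + 2) (mb + mc + 1) (RSym.op :: b ++ RSym.cl :: c) := by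
  obtain ⟨hbl, hbo, hbc, hbp, hbno⟩ := hb
  obtain ⟨hcl, hco, hcc, hcp, hcno⟩ := hc
  have heq : b.count RSym.op = b.count RSym.cl := hbo.trans hbc.symm
  refine ⟨?_, ?_, ?_, ?_, not_infix_cons_append_cons hne hbp heq hbno hcno⟩
  · simp only [length_append, length_cons]
    omega
  · simp only [count_append, count_cons, beq_iff_eq, reduceCtorEq, ↓reduceIte]
    omega
  · simp only [count_append, count_cons, beq_iff_eq, reduceCtorEq, ↓reduceIte]
    omega
  · have hwrap : RSym.op :: b ++ RSym.cl :: c = (RSym.op :: b ++ [RSym.cl]) ++ c := by simp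
    rw [hwrap]
    exact (IsBallot.wrap hbp).append (by simp [heq]) hcp

lemma isLeast_cons_append_cons (hb : IsBallot b) (heq : b.count RSym.op = b.count RSym.cl) :
    IsLeast {p : ℕ | 1 < p ∧ ((RSym.op :: b ++ RSym.cl :: c).take p).count RSym.op =
      ((RSym.op :: b ++ RSym.cl :: c).take p).count RSym.cl} (b.length + 2) := by
  refine ⟨⟨by omega, ?_⟩, ?_⟩
  · rw [show b.length + 2 = (RSym.op :: b).length + 1 by simp, take_length_add_append]
    simp [heq]
  · rintro q ⟨hq, hcount⟩
    by_contra! hlt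
    obtain ⟨p, rfl⟩ : ∃ p, q = p + 1 := ⟨q - 1, by omega⟩
    rw [take_append_of_le_length (by simp only [length_cons]; omega), take_succ_cons,
      count_cons_self, count_cons_of_ne (by decide)] at hcount
    have := hb p
    omega

end

lemma exists_first_return {t : List RSym}
    (hpre : ∀ p, (t.take p).count RSym.cl ≤ (t.take p).count RSym.op + 1)
    (hend : t.count RSym.cl = t.count RSym.op + 1) :
    ∃ b c, t = b ++ RSym.cl :: c ∧ IsBallot b ∧ b.count RSym.op = b.count RSym.cl := by
  classical
  have hex : ∃ p, (t.take p).count RSym.cl = (t.take p).count RSym.op + 1 :=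
    ⟨t.length, by rwa [take_length]⟩
  have hbefore : ∀ p < Nat.find hex, (t.take p).count RSym.cl ≤ (t.take p).count RSym.op :=
    fun p hp => by
      have := Nat.find_min hex hp
      have := hpre p
      omega
  obtain ⟨k, hk⟩ : ∃ k, Nat.find hex = k + 1 :=
    Nat.exists_eq_succ_of_ne_zero fun h => by simpa [h] using Nat.find_spec hex
  have hkt : k < t.length := by
    by_contra! hle
    exact Nat.find_min hex (m := k) (by rw [hk]; omega) (by rwa [take_of_length_le hle])
  have hlast := Nat.find_spec hex
  rw [hk, ← take_concat_get' t k hkt] at hlast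
  have := hbefore k (by omega)
  have hget : t[k] = RSym.cl := by
    cases h : t[k] <;>
      simp only [h, count_append, count_cons, count_nil, beq_iff_eq, reduceCtorEq, ↓reduceIte]
        at hlast ⊢ <;> omega
  refine ⟨t.take k, t.drop (k + 1), ?_, fun p => ?_, ?_⟩
  · rw [← hget, ← drop_eq_getElem_cons hkt, take_append_drop]
  · rw [take_take]
    exact hbefore _ (by omega)
  · simp only [hget, count_append, count_cons, count_nil, beq_iff_eq, reduceCtorEq, ↓reduceIte]
      at hlast
    omega

lemma isRNA.split_first_return {n m : ℕ} {t : List RSym} (ha : isRNA n m (RSym.op :: t)) :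
    ∃ b c, t = b ++ RSym.cl :: c ∧ b ≠ [] ∧
      isRNA b.length (b.count RSym.op) b ∧ isRNA c.length (c.count RSym.op) c := by
  obtain ⟨-, hop, hcl, hpre, hno⟩ := ha
  obtain ⟨b, c, rfl, hb, heq⟩ := exists_first_return
    (fun p => by simpa using hpre (p + 1))
    (by rw [count_cons_self] at hop; simpa [hop] using hcl)
  have hwrap : RSym.op :: (b ++ RSym.cl :: c) = (RSym.op :: b ++ [RSym.cl]) ++ c := by simp
  have hc : IsBallot c := by
    rw [hwrap] at hpre
    exact IsBallot.of_append hpre (by simp [heq])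
  have hceq : c.count RSym.op = c.count RSym.cl := by
    simp only [count_append, count_cons, beq_iff_eq, reduceCtorEq, ↓reduceIte] at hop hcl
    omega
  have hbinf : b <:+: RSym.op :: (b ++ RSym.cl :: c) := infix_cons (prefix_append _ _).isInfix
  have hcinf : c <:+: RSym.op :: (b ++ RSym.cl :: c) := by
    rw [hwrap]
    exact (suffix_append _ _).isInfix
  refine ⟨b, c, rfl, ?_, ⟨rfl, rfl, heq.symm, hb, fun h => hno (h.trans hbinf)⟩,
    ⟨rfl, rfl, hceq.symm, hc, fun h => hno (h.trans hcinf)⟩⟩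
  rintro rfl
  exact hno ⟨[], c, rfl⟩

lemma Idx.nat_bounds {n m : ℕ} (p : Idx n m) :
    p.1.1 + 1 ≤ m ∧ 2 * p.1.1 ≤ p.1.2 ∧ p.1.2 + 2 * (m - p.1.1) + 1 ≤ n := by
  obtain ⟨⟨i, j⟩, h₁, h₂, h₃⟩ := p
  dsimp only at h₁ h₂ h₃ ⊢
  omega

lemma glue_injective (n m : ℕ) : Function.Injective (glue n m) := by
  rintro ⟨⟨⟨i, j⟩, hij⟩, ⟨b, hb⟩, ⟨c, hc⟩⟩ ⟨⟨⟨i', j'⟩, hij'⟩, ⟨b', hb'⟩, ⟨c', hc'⟩⟩ h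
  simp only [glue] at h
  obtain ⟨-, hbo, hbc, hbp, -⟩ := hb
  obtain ⟨-, hbo', hbc', hbp', -⟩ := hb'
  have hlen : b.length = b'.length := by
    have hleast := isLeast_cons_append_cons (c := c) hbp (hbo.trans hbc.symm)
    rw [h] at hleast
    exact Nat.add_right_cancel
      (hleast.unique (isLeast_cons_append_cons hbp' (hbo'.trans hbc'.symm)))
  obtain ⟨rfl, hcc⟩ := append_inj (cons_inj_right _ |>.1 h) hlen
  obtain rfl := (cons_inj_right _).1 hcc
  obtain rfl : j = j' := hc.1.symm.trans hc'.1
  obtain rfl : i = i' := hc.2.1.symm.trans hc'.2.1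
  rfl

lemma range_glue (n m : ℕ) :
    Set.range (glue n m) = {a : List RSym | isRNA n m a ∧ a.head? = some RSym.op} := by
  ext a
  constructor
  · rintro ⟨⟨p, ⟨b, hb⟩, ⟨c, hc⟩⟩, rfl⟩
    obtain ⟨hi, -, hjn⟩ := Idx.nat_bounds p
    have hne : b ≠ [] := ne_nil_of_length_pos (by rw [hb.1]; omega)
    refine ⟨?_, rfl⟩
    have h := isRNA_cons_append_cons hb hc hne
    rwa [show n - 2 - p.1.2 + p.1.2 + 2 = n by omega,
      show m - 1 - p.1.1 + p.1.1 + 1 = m by omega] at h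
  · rintro ⟨ha, hhead⟩
    obtain ⟨t, rfl⟩ := head?_eq_some_iff.1 hhead
    obtain ⟨b, c, rfl, hne, hb, hc⟩ := ha.split_first_return
    have hblen := hb.two_mul_lt hne
    have hclen := count_op_add_count_cl_add_count_st c
    have hn := ha.1
    have hm := ha.2.1
    simp only [length_cons, length_append, count_append, count_cons, beq_iff_eq, reduceCtorEq,
      ↓reduceIte] at hn hm
    rw [hc.2.2.1] at hclen
    refine ⟨⟨⟨(c.count RSym.op, c.length), ?_⟩, ⟨b, ?_⟩, ⟨c, hc⟩⟩, rfl⟩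
    · dsimp only
      omega
    · convert hb using 1 <;> dsimp only <;> omega

lemma glue_matching (n m : ℕ)
    (q : Σ p : Idx n m, RNAset (n - 2 - p.1.2) (m - 1 - p.1.1) × RNAset p.1.2 p.1.1) :
    IsLeast {p : ℕ | 1 < p ∧
        ((glue n m q).take p).count RSym.op = ((glue n m q).take p).count RSym.cl}
      (n - q.1.1.2) ∧
    (glue n m q)[n - q.1.1.2 - 1]? = some RSym.cl := by
  obtain ⟨p, ⟨b, hb⟩, c⟩ := q
  obtain ⟨hi, -, hjn⟩ := Idx.nat_bounds p
  obtain ⟨hbl, hbo, hbc, hbp, -⟩ := hb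
  have hpos : n - p.1.2 = b.length + 2 := by
    rw [hbl]
    omega
  simp only [glue, hpos]
  refine ⟨isLeast_cons_append_cons hbp (hbo.trans hbc.symm), ?_⟩
  rw [getElem?_append_right (by simp)]
  simp

theorem glue_bijection_general (n m : ℕ) :
    Function.Injective (glue n m) ∧
      Set.range (glue n m) = {a : List RSym | isRNA n m a ∧ a.head? = some RSym.op} ∧
      ∀ q : Σ p : Idx n m, RNAset (n - 2 - p.1.2) (m - 1 - p.1.1) × RNAset p.1.2 p.1.1,
        IsLeast {p : ℕ | 1 < p ∧
            ((glue n m q).take p).count RSym.op = ((glue n m q).take p).count RSym.cl}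
          (n - q.1.1.2) ∧
        (glue n m q)[n - q.1.1.2 - 1]? = some RSym.cl :=
  ⟨glue_injective n m, range_glue n m, glue_matching n m⟩

/-- For all `n ≥ 1` and `m ≥ 1`, the map `((i,j),(b,c)) ↦ '(' ++ b ++ ')' ++ c` is a bijection
from the disjoint union, over pairs `(i,j)` with `0 ≤ i ≤ m-1` and `2i ≤ j ≤ n-2(m-i)-1`, of
the products `A_{n-2-j, m-1-i} × A_{j,i}`, onto the subset of `A_{n,m}` of words whose first
symbol is `'('`.  Moreover, for such a word `a = '(' ++ b ++ ')' ++ c` with `b` of length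
`n-2-j`, the position `n - j` is the least position `p > 1` at which the prefix `a_1 … a_p`
contains equally many `'('` and `')'` (so the `')'` at position `n - j`, which is indeed a
`')'`, is the matching bracket of the initial `'('` of `a`). -/
theorem glue_bijection (n m : ℕ) (hn : 1 ≤ n) (hm : 1 ≤ m) :
    Function.Injective (glue n m) ∧
      Set.range (glue n m) = {a : List RSym | isRNA n m a ∧ a.head? = some RSym.op} ∧
      ∀ q : Σ p : Idx n m, RNAset (n - 2 - p.1.2) (m - 1 - p.1.1) × RNAset p.1.2 p.1.1,
        IsLeast {p : ℕ | 1 < p ∧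
            ((glue n m q).take p).count RSym.op = ((glue n m q).take p).count RSym.cl}
          (n - q.1.1.2) ∧
        (glue n m q)[n - q.1.1.2 - 1]? = some RSym.cl :=
  glue_bijection_general n m
end
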